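/- arXiv:0802.4436 — 12 statements merged into one kernel-verified Lean document; each statement's English description precedes it below -/
import Mathlib

section
/- Let X be a compact metric space, M a metric space, and g : X → M a continuous map. Suppose that for every m,n ≥ 1 and every subcontinuum L ⊆ X with diam g(L) ≥ 1/n there exists x ∈ L whose component in g⁻¹(g(x)) lies in the open 1/m-neighborhood of L. Then g is a Krasinkiewicz map, i.e., every subcontinuum of X is either contained in a fiber of g or contains a component of a fiber of g. -/
open Set Metric Topology

section Helpers

/-- In a compact T2 space, if the connected component of `x` misses a closed set `B`,
then some clopen set containing `x` misses `B`. -/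
private lemma exists_isClopen_inter_empty {α : Type*} [TopologicalSpace α] [T2Space α]
    [CompactSpace α] (x : α) {B : Set α} (hB : IsClosed B)
    (h : connectedComponent x ∩ B = ∅) :
    ∃ Q : Set α, IsClopen Q ∧ x ∈ Q ∧ Q ∩ B = ∅ := by
  by_contra hc
  push_neg at hc
  haveI : Nonempty {s : Set α // IsClopen s ∧ x ∈ s} := ⟨⟨univ, isClopen_univ, mem_univ x⟩⟩
  have hne : (⋂ s : {s : Set α // IsClopen s ∧ x ∈ s}, ((s : Set α) ∩ B)).Nonempty := by
    apply IsCompact.nonempty_iInter_of_directed_nonempty_isCompact_isClosed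
    · intro i j
      refine ⟨⟨i.1 ∩ j.1, i.2.1.inter j.2.1, ⟨i.2.2, j.2.2⟩⟩, ?_, ?_⟩
      · exact inter_subset_inter_left _ inter_subset_left
      · exact inter_subset_inter_left _ inter_subset_right
    · exact fun i => hc i.1 i.2.1 i.2.2
    · exact fun i => (i.2.1.isClosed.inter hB).isCompact
    · exact fun i => i.2.1.isClosed.inter hB
  rw [← iInter_inter, ← connectedComponent_eq_iInter_isClopen, h] at hne
  exact hne.ne_empty rfl



set_option linter.unusedSectionVars false

variable {X M : Type*} [MetricSpace X] [CompactSpace X] [MetricSpace M] {g : X → M}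

/-- notation for the component of x in its fiber -/
private def fcomp (g : X → M) (x : X) : Set X := connectedComponentIn (g ⁻¹' {g x}) x

private lemma fcomp_eq_of_mem {x y : X} (h : y ∈ fcomp g x) : fcomp g y = fcomp g x := by
  have hy : y ∈ g ⁻¹' {g x} := connectedComponentIn_subset _ _ h
  have hgy : g y = g x := hy
  unfold fcomp
  rw [hgy]
  exact (connectedComponentIn_eq h).symm

private lemma isCompact_connectedComponentIn {F : Set X} (hF : IsClosed F) (x : X) :
    IsCompact (connectedComponentIn F x) := by
  by_cases hx : x ∈ F
  · rw [connectedComponentIn_eq_image hx]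
    haveI : CompactSpace F := isCompact_iff_compactSpace.mp hF.isCompact
    exact (isClosed_connectedComponent.isCompact).image continuous_subtype_val
  · rw [connectedComponentIn_eq_empty hx]
    exact isCompact_empty

private lemma isCompact_fcomp (hg : Continuous g) (x : X) : IsCompact (fcomp g x) :=
  isCompact_connectedComponentIn (isClosed_singleton.preimage hg) x

/-- upper semicontinuity of the fiber-component decomposition -/
private lemma usc_fcomp (hg : Continuous g) {U : Set X} (hU : IsOpen U) :
    IsOpen {x | fcomp g x ⊆ U} := by
  rw [isOpen_iff_forall_mem_open]
  intro x hx
  simp only [mem_setOf_eq] at hx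
  -- the fiber of x
  set F : Set X := g ⁻¹' {g x} with hFdef
  have hFclosed : IsClosed F := isClosed_singleton.preimage hg
  haveI : CompactSpace F := isCompact_iff_compactSpace.mp hFclosed.isCompact
  have hxF : x ∈ F := by simp [hFdef]
  -- clopen separation inside the fiber
  have himg : fcomp g x = (↑) '' connectedComponent (⟨x, hxF⟩ : F) :=
    connectedComponentIn_eq_image hxF
  have hCB : connectedComponent (⟨x, hxF⟩ : F) ∩ ((↑) ⁻¹' Uᶜ : Set F) = ∅ := by
    apply eq_empty_iff_forall_notMem.mpr
    rintro z ⟨hz1, hz2⟩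
    exact hz2 (hx (himg ▸ ⟨z, hz1, rfl⟩))
  obtain ⟨Q, hQ, hxQ, hQB⟩ := exists_isClopen_inter_empty (⟨x, hxF⟩ : F)
    (hU.isClosed_compl.preimage continuous_subtype_val) hCB
  set A : Set X := (↑) '' Q with hAdef
  set B : Set X := (↑) '' Qᶜ with hBdef
  have hAc : IsCompact A := (hQ.isClosed.isCompact).image continuous_subtype_val
  have hBc : IsCompact B := (hQ.isOpen.isClosed_compl.isCompact).image continuous_subtype_val
  have hxA : x ∈ A := ⟨⟨x, hxF⟩, hxQ, rfl⟩
  have hAU : A ⊆ U := by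
    rintro a ⟨z, hzQ, rfl⟩
    by_contra hzU
    exact (eq_empty_iff_forall_notMem.mp hQB z) ⟨hzQ, hzU⟩
  have hAB : Disjoint A B := by
    rw [disjoint_left]
    rintro a ⟨z1, hz1, rfl⟩ ⟨z2, hz2, hz⟩
    exact hz2 (by rw [Subtype.coe_injective hz]; exact hz1)
  obtain ⟨δ₁, hδ₁pos, hδ₁⟩ := hAc.exists_thickening_subset_open hU hAU
  obtain ⟨δ₂, hδ₂pos, hδ₂⟩ := hAB.exists_thickenings hAc hBc.isClosed
  set δ := min δ₁ δ₂ with hδdef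
  have hδpos : 0 < δ := lt_min hδ₁pos hδ₂pos
  have hthickU : thickening δ A ⊆ U := (thickening_mono (min_le_left _ _) A).trans hδ₁
  have hdisj : Disjoint (thickening δ A) (thickening δ B) :=
    hδ₂.mono (thickening_mono (min_le_right _ _) A) (thickening_mono (min_le_right _ _) B)
  -- the fiber is inside the two thickenings
  set O : Set X := thickening δ A ∪ thickening δ B with hOdef
  have hFO : F ⊆ O := by
    intro z hz
    by_cases hzQ : (⟨z, hz⟩ : F) ∈ Q
    · exact Or.inl (self_subset_thickening hδpos A ⟨⟨z, hz⟩, hzQ, rfl⟩)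
    · exact Or.inr (self_subset_thickening hδpos B ⟨⟨z, hz⟩, hzQ, rfl⟩)
  -- fibers of nearby points are inside O
  have hDc : IsCompact (Oᶜ) :=
    ((isOpen_thickening.union isOpen_thickening).isClosed_compl).isCompact
  have hgD : IsClosed (g '' Oᶜ) := (hDc.image hg).isClosed
  have hgxD : g x ∉ g '' Oᶜ := by
    rintro ⟨z, hz, hgz⟩
    exact hz (hFO (show z ∈ F from hgz))
  obtain ⟨ε, hεpos, hεball⟩ := Metric.isOpen_iff.mp hgD.isOpen_compl (g x) hgxD
  refine ⟨g ⁻¹' (ball (g x) ε) ∩ thickening δ A, ?_, ?_, ?_⟩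
  · -- subset of the good set
    rintro y ⟨hy1, hy2⟩
    simp only [mem_setOf_eq]
    have hyF : y ∈ g ⁻¹' {g y} := rfl
    have hfib : g ⁻¹' {g y} ⊆ O := by
      intro z hz
      by_contra hzO
      exact (hεball (show g z ∈ ball (g x) ε by
        rw [show g z = g y from hz]; exact hy1)) ⟨z, hzO, rfl⟩
    have : fcomp g y ⊆ thickening δ A := by
      apply IsPreconnected.subset_left_of_subset_union isOpen_thickening isOpen_thickening hdisj
      · exact (connectedComponentIn_subset _ _).trans hfib
      · exact ⟨y, mem_connectedComponentIn hyF, hy2⟩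
      · exact isPreconnected_connectedComponentIn
    exact this.trans hthickU
  · exact (hg.isOpen_preimage _ isOpen_ball).inter isOpen_thickening
  · exact ⟨mem_ball_self hεpos, self_subset_thickening hδpos A hxA⟩

/-- the setoid identifying points in the same connected component of the same fiber -/
private def ksetoid (g : X → M) : Setoid X where
  r x y := y ∈ fcomp g x
  iseqv := by
    constructor
    · intro x
      exact mem_connectedComponentIn rfl
    · intro x y h
      have := fcomp_eq_of_mem (g := g) h
      rw [this]
      exact mem_connectedComponentIn rfl
    · intro x y z hy hz
      rwa [fcomp_eq_of_mem (g := g) hy] at hz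

private lemma ksetoid_fcomp_eq {x y : X} (h : Quotient.mk (ksetoid g) x = Quotient.mk (ksetoid g) y) :
    fcomp g x = fcomp g y := by
  have := Quotient.exact h
  exact (fcomp_eq_of_mem (g := g) this).symm

private lemma t2_kquot (hg : Continuous g) : T2Space (Quotient (ksetoid g)) := by
  constructor
  intro a b hab
  obtain ⟨x₁, rfl⟩ := Quotient.exists_rep a
  obtain ⟨x₂, rfl⟩ := Quotient.exists_rep b
  have hdisj : Disjoint (fcomp g x₁) (fcomp g x₂) := by
    rw [disjoint_left]
    intro z hz1 hz2
    apply hab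
    apply Quotient.sound
    show x₂ ∈ fcomp g x₁
    rw [← fcomp_eq_of_mem (g := g) hz1, fcomp_eq_of_mem (g := g) hz2]
    exact mem_connectedComponentIn rfl
  obtain ⟨δ, hδpos, hδ⟩ := hdisj.exists_thickenings (isCompact_fcomp hg x₁)
    (isCompact_fcomp hg x₂).isClosed
  set O₁ : Set X := {z | fcomp g z ⊆ thickening δ (fcomp g x₁)} with hO₁
  set O₂ : Set X := {z | fcomp g z ⊆ thickening δ (fcomp g x₂)} with hO₂
  have hO₁open : IsOpen O₁ := usc_fcomp hg isOpen_thickening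
  have hO₂open : IsOpen O₂ := usc_fcomp hg isOpen_thickening
  -- saturation of O₁, O₂
  have hsat₁ : Quotient.mk (ksetoid g) ⁻¹' (Quotient.mk (ksetoid g) '' O₁) = O₁ := by
    apply Subset.antisymm
    · rintro z ⟨w, hw, he⟩
      show fcomp g z ⊆ _
      rw [← ksetoid_fcomp_eq he]
      exact hw
    · exact subset_preimage_image _ _
  have hsat₂ : Quotient.mk (ksetoid g) ⁻¹' (Quotient.mk (ksetoid g) '' O₂) = O₂ := by
    apply Subset.antisymm
    · rintro z ⟨w, hw, he⟩
      show fcomp g z ⊆ _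
      rw [← ksetoid_fcomp_eq he]
      exact hw
    · exact subset_preimage_image _ _
  refine ⟨Quotient.mk _ '' O₁, Quotient.mk _ '' O₂, ?_, ?_, ?_, ?_, ?_⟩
  · rw [isOpen_coinduced (f := Quotient.mk (ksetoid g))] at *
    rwa [hsat₁]
  · rw [isOpen_coinduced (f := Quotient.mk (ksetoid g))] at *
    rwa [hsat₂]
  · exact mem_image_of_mem _ (self_subset_thickening hδpos _)
  · exact mem_image_of_mem _ (self_subset_thickening hδpos _)
  · rw [disjoint_left]
    rintro c ⟨z1, hz1, he1⟩ ⟨z2, hz2, he2⟩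
    have he : fcomp g z1 = fcomp g z2 := ksetoid_fcomp_eq (he1.trans he2.symm)
    have hz : z1 ∈ fcomp g z1 := mem_connectedComponentIn rfl
    exact (hδ.mono hz1 (he ▸ hz2)).ne_of_mem hz hz rfl

/-- Boundary bumping, in the weak form we need. -/
private lemma bumping {K N : Set X} (hK : IsCompact K) (hKc : IsPreconnected K)
    (hN : IsClosed N) (hNK : N ⊆ K) (hne : N ≠ K) {x₀ : X} (hx₀ : x₀ ∈ N) :
    ∃ z ∈ connectedComponentIn N x₀, z ∈ closure (K \ N) := by
  by_contra hcon
  push_neg at hcon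
  haveI : CompactSpace N := isCompact_iff_compactSpace.mp (hK.of_isClosed_subset hN hNK)
  have hCB : connectedComponent (⟨x₀, hx₀⟩ : N) ∩ ((↑) ⁻¹' closure (K \ N) : Set N) = ∅ := by
    apply eq_empty_iff_forall_notMem.mpr
    rintro z ⟨hz1, hz2⟩
    refine hcon z ?_ hz2
    rw [connectedComponentIn_eq_image hx₀]
    exact ⟨z, hz1, rfl⟩
  obtain ⟨Q, hQ, hxQ, hQB⟩ := exists_isClopen_inter_empty (⟨x₀, hx₀⟩ : N)
    (isClosed_closure.preimage continuous_subtype_val) hCB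
  set G : Set X := (↑) '' Q with hGdef
  have hGclosed : IsClosed G := (hQ.isClosed.isCompact.image continuous_subtype_val).isClosed
  have hGN : G ⊆ N := by rintro z ⟨w, _, rfl⟩; exact w.2
  obtain ⟨V, hVopen, hVQ⟩ := isOpen_induced_iff.mp hQ.isOpen
  have hGV : G = V ∩ N := by
    rw [hGdef, ← hVQ, Subtype.image_preimage_coe, inter_comm]
  have hGB : ∀ z ∈ G, z ∉ closure (K \ N) := by
    rintro z ⟨w, hwQ, rfl⟩ hcl
    exact (eq_empty_iff_forall_notMem.mp hQB w) ⟨hwQ, hcl⟩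
  set W : Set X := V ∩ (closure (K \ N))ᶜ with hWdef
  have hWopen : IsOpen W := hVopen.inter isClosed_closure.isOpen_compl
  have hWKG : W ∩ K ⊆ G := by
    rintro w ⟨⟨hwV, hwcl⟩, hwK⟩
    have hwN : w ∈ N := by
      by_contra hwN
      exact hwcl (subset_closure ⟨hwK, hwN⟩)
    rw [hGV]; exact ⟨hwV, hwN⟩
  have hGW : G ⊆ W := by
    intro z hz
    exact ⟨(hGV ▸ hz).1, hGB z hz⟩
  have hx₀G : x₀ ∈ G := ⟨⟨x₀, hx₀⟩, hxQ, rfl⟩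
  obtain ⟨z₁, hz₁K, hz₁N⟩ : ∃ z, z ∈ K ∧ z ∉ N := by
    by_contra hc
    push_neg at hc
    exact hne (Subset.antisymm hNK hc)
  have := hKc W Gᶜ hWopen hGclosed.isOpen_compl
    (fun z hzK => by
      by_cases hzG : z ∈ G
      · exact Or.inl (hGW hzG)
      · exact Or.inr hzG)
    ⟨x₀, hNK hx₀, hGW hx₀G⟩
    ⟨z₁, hz₁K, fun hzG => hz₁N (hGN hzG)⟩
  obtain ⟨w, hwK, hwW, hwG⟩ := this
  exact hwG (hWKG ⟨hwW, hwK⟩)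

end Helpers

theorem stmt_0 {X M : Type*} [MetricSpace X] [CompactSpace X] [MetricSpace M]
    (g : X → M) (hg : Continuous g)
    (H : ∀ m n : ℕ, 0 < m → 0 < n → ∀ L : Set X, IsCompact L → IsConnected L →
      Metric.diam (g '' L) ≥ 1 / (n : ℝ) →
      ∃ x ∈ L, connectedComponentIn (g ⁻¹' {g x}) x ⊆ Metric.thickening (1 / (m : ℝ)) L) :
    ∀ K : Set X, IsCompact K → IsConnected K →
      (g '' K).Subsingleton ∨ ∃ x ∈ K, connectedComponentIn (g ⁻¹' {g x}) x ⊆ K := by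
  intro K hKcomp hKconn
  by_cases hsub : (g '' K).Subsingleton
  · exact Or.inl hsub
  right
  by_contra hA
  push_neg at hA
  have hA' : ∀ x ∈ K, ¬ fcomp g x ⊆ K := hA
  have hKne : K.Nonempty := hKconn.nonempty
  have hKcl : IsClosed K := hKcomp.isClosed
  rw [Set.not_subsingleton_iff] at hsub
  obtain ⟨a, ha, b, hb, hab⟩ := hsub
  have hdpos : 0 < Metric.diam (g '' K) :=
    lt_of_lt_of_le (dist_pos.mpr hab)
      (Metric.dist_le_diam_of_mem (hKcomp.image hg).isBounded ha hb)
  obtain ⟨n, hn⟩ := exists_nat_one_div_lt hdpos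
  have hdiamK : Metric.diam (g '' K) ≥ 1 / ((n + 1 : ℕ) : ℝ) := by push_cast; linarith
  -- the closed "bad" sets
  set G : ℕ → Set X :=
    fun m => {x | x ∈ K ∧ ¬ fcomp g x ⊆ thickening (1 / ((m + 1 : ℕ) : ℝ)) K} with hGdef
  have hGsub : ∀ m, G m ⊆ K := fun m x hx => hx.1
  have hGclosed : ∀ m, IsClosed (G m) := by
    intro m
    have he : G m = K ∩ {x | fcomp g x ⊆ thickening (1 / ((m + 1 : ℕ) : ℝ)) K}ᶜ := rfl
    rw [he]
    exact hKcl.inter (usc_fcomp hg isOpen_thickening).isClosed_compl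
  have hGcover : ∀ x ∈ K, ∃ m, x ∈ G m := by
    intro x hx
    obtain ⟨p, hp, hpK⟩ := (Set.not_subset).mp (hA' x hx)
    have hpos : 0 < infDist p K := (hKcl.notMem_iff_infDist_pos hKne).mp hpK
    obtain ⟨m, hm⟩ := exists_nat_one_div_lt hpos
    refine ⟨m, hx, fun hsubthick => ?_⟩
    have hmem := hsubthick hp
    rw [mem_thickening_iff_infDist_lt hKne] at hmem
    push_cast at hm hmem
    linarith
  -- the quotient space
  haveI hT2 : T2Space (Quotient (ksetoid g)) := t2_kquot hg
  set q : X → Quotient (ksetoid g) := Quotient.mk (ksetoid g) with hq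
  have hqcont : Continuous q := continuous_quotient_mk'
  set Khat : Set (Quotient (ksetoid g)) := q '' K with hKhat
  have hKhatcomp : IsCompact Khat := hKcomp.image hqcont
  haveI : CompactSpace Khat := isCompact_iff_compactSpace.mp hKhatcomp
  haveI : Nonempty Khat := ⟨⟨q hKne.choose, hKne.choose, hKne.choose_spec, rfl⟩⟩
  -- Baire category
  obtain ⟨m₀, hm₀⟩ := nonempty_interior_of_iUnion_of_closed
    (f := fun m => ((↑) ⁻¹' (q '' G m) : Set Khat))
    (fun m => (((hKcomp.of_isClosed_subset (hGclosed m) (hGsub m)).image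
      hqcont).isClosed).preimage continuous_subtype_val)
    (by
      apply eq_univ_iff_forall.mpr
      rintro ⟨y, x, hxK, rfl⟩
      obtain ⟨m, hm⟩ := hGcover x hxK
      exact mem_iUnion.mpr ⟨m, mem_preimage.mpr (mem_image_of_mem q hm)⟩)
  obtain ⟨y₀, hy₀⟩ := hm₀
  -- saturation transfer
  have hsatG : ∀ z ∈ K, q z ∈ q '' G m₀ → z ∈ G m₀ := by
    rintro z hzK ⟨w, hwG, hqe⟩
    have hcw : fcomp g w = fcomp g z := ksetoid_fcomp_eq hqe
    exact ⟨hzK, by rw [← hcw]; exact hwG.2⟩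
  -- pull out an open neighborhood downstairs
  have hnh : ((↑) ⁻¹' (q '' G m₀) : Set Khat) ∈ 𝓝 y₀ := mem_interior_iff_mem_nhds.mp hy₀
  rw [nhds_induced, Filter.mem_comap] at hnh
  obtain ⟨t, htnh, htsub⟩ := hnh
  obtain ⟨Vh, hVnh, hVclosed, hVt⟩ := exists_mem_nhds_isClosed_subset htnh
  have hUmem : ∀ y, y ∈ Khat → y ∈ t → y ∈ q '' G m₀ := fun y hyK hyt =>
    htsub (show (⟨y, hyK⟩ : Khat) ∈ (↑) ⁻¹' t from hyt)
  obtain ⟨x₀, hx₀G, hqx₀⟩ : (y₀ : Quotient (ksetoid g)) ∈ q '' G m₀ :=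
    hUmem _ y₀.2 (mem_of_mem_nhds htnh)
  set N : Set X := K ∩ q ⁻¹' Vh with hNdef
  have hNclosed : IsClosed N := hKcl.inter (hVclosed.preimage hqcont)
  have hNsub : N ⊆ K := inter_subset_left
  have hNG : N ⊆ G m₀ := by
    rintro z ⟨hzK, hzV⟩
    exact hsatG z hzK (hUmem (q z) (mem_image_of_mem q hzK) (hVt hzV))
  have hx₀N : x₀ ∈ N := ⟨hGsub m₀ hx₀G, by
    show q x₀ ∈ Vh
    rw [hqx₀]
    exact mem_of_mem_nhds hVnh⟩
  by_cases hNK : N = K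
  · -- all of K is bad at scale m₀
    obtain ⟨x, hxK, hxsub⟩ := H (m₀ + 1) (n + 1) (Nat.succ_pos _) (Nat.succ_pos _)
      K hKcomp hKconn hdiamK
    exact (hNG (by rw [hNK]; exact hxK)).2 hxsub
  · -- boundary bumping gives a continuum in G m₀ with nondegenerate image
    obtain ⟨zs, hzscomp, hzscl⟩ :=
      bumping hKcomp hKconn.isPreconnected hNclosed hNsub hNK hx₀N
    set L : Set X := connectedComponentIn N x₀ with hLdef
    have hLN : L ⊆ N := connectedComponentIn_subset _ _
    have hLcompact : IsCompact L := isCompact_connectedComponentIn hNclosed x₀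
    have hLconn : IsConnected L := isConnected_connectedComponentIn_iff.mpr hx₀N
    have hx₀L : x₀ ∈ L := mem_connectedComponentIn hx₀N
    have hLnd : ¬ (g '' L).Subsingleton := by
      intro hs
      have hLfib : L ⊆ g ⁻¹' {g x₀} := by
        intro z hz
        exact hs (mem_image_of_mem g hz) (mem_image_of_mem g hx₀L)
      have hLC : L ⊆ fcomp g x₀ :=
        hLconn.isPreconnected.subset_connectedComponentIn hx₀L hLfib
      have hqe : q x₀ = q zs := Quotient.sound (hLC hzscomp)
      have hzsV : zs ∈ q ⁻¹' (interior Vh) := by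
        show q zs ∈ interior Vh
        rw [← hqe, hqx₀]
        exact mem_interior_iff_mem_nhds.mpr hVnh
      obtain ⟨w, hwo, hwKN⟩ := mem_closure_iff.mp hzscl _
        (isOpen_interior.preimage hqcont) hzsV
      exact hwKN.2 ⟨hwKN.1, show q w ∈ Vh from interior_subset (show q w ∈ interior Vh from hwo)⟩
    rw [Set.not_subsingleton_iff] at hLnd
    obtain ⟨c, hc, d, hd, hcd⟩ := hLnd
    have hdLpos : 0 < Metric.diam (g '' L) :=
      lt_of_lt_of_le (dist_pos.mpr hcd)
        (Metric.dist_le_diam_of_mem (hLcompact.image hg).isBounded hc hd)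
    obtain ⟨n₁, hn₁⟩ := exists_nat_one_div_lt hdLpos
    have hdiamL : Metric.diam (g '' L) ≥ 1 / ((n₁ + 1 : ℕ) : ℝ) := by push_cast; linarith
    obtain ⟨x, hxL, hxsub⟩ := H (m₀ + 1) (n₁ + 1) (Nat.succ_pos _) (Nat.succ_pos _)
      L hLcompact hLconn hdiamL
    exact (hNG (hLN hxL)).2
      (hxsub.trans (thickening_subset_of_subset _ (hLN.trans hNsub)))
end

section
/- Let X be a compact metric space, M a complete metric space, and m, n positive integers. The set K(m,n) of all continuous maps g : X → M such that for every subcontinuum L ⊆ X with diam g(L) ≥ 1/n there exists x ∈ L with C(x,g) ⊆ B(L, 1/m) is open in C(X,M) with the uniform convergence topology. -/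
open Metric Set Filter Topology

/-- In a compact Hausdorff space, between a connected component and an open set containing it,
there is a clopen set. -/
lemma aux_clopen_between {Y : Type*} [TopologicalSpace Y] [T2Space Y] [CompactSpace Y]
    (x : Y) {U : Set Y} (hU : IsOpen U) (h : connectedComponent x ⊆ U) :
    ∃ V : Set Y, IsClopen V ∧ x ∈ V ∧ V ⊆ U := by
  let N := { s : Set Y // IsClopen s ∧ x ∈ s }
  haveI : Nonempty N := ⟨⟨univ, isClopen_univ, mem_univ x⟩⟩
  have hdir : Directed (· ⊇ ·) fun s : N => s.val := by
    rintro ⟨s, hs, hxs⟩ ⟨t, ht, hxt⟩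
    exact ⟨⟨s ∩ t, hs.inter ht, ⟨hxs, hxt⟩⟩, inter_subset_left, inter_subset_right⟩
  have h_nhd : ∀ y ∈ ⋂ s : N, s.val, U ∈ 𝓝 y := by
    intro y hy
    apply hU.mem_nhds
    apply h
    rwa [connectedComponent_eq_iInter_isClopen]
  obtain ⟨⟨V, hV, hxV⟩, hVU⟩ :=
    exists_subset_nhds_of_compactSpace hdir (fun s : N => s.2.1.1) h_nhd
  exact ⟨V, hV, hxV, hVU⟩

/-- A clopen piece of a compact set, inside an open set containing the relative
connected component. -/
lemma aux_clopen_piece {X : Type*} [MetricSpace X] {F U : Set X} (hF : IsCompact F)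
    (hU : IsOpen U) {x : X} (hx : x ∈ F) (hcc : connectedComponentIn F x ⊆ U) :
    ∃ V : Set X, x ∈ V ∧ V ⊆ F ∩ U ∧ IsCompact V ∧ IsCompact (F \ V) := by
  haveI : CompactSpace F := isCompact_iff_compactSpace.mp hF
  have h1 : connectedComponent (⟨x, hx⟩ : F) ⊆ (Subtype.val : F → X) ⁻¹' U := by
    intro y hy
    apply hcc
    rw [connectedComponentIn_eq_image hx]
    exact ⟨y, hy, rfl⟩
  obtain ⟨V₀, hV₀, hxV₀, hV₀U⟩ :=
    aux_clopen_between (⟨x, hx⟩ : F) (hU.preimage continuous_subtype_val) h1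
  refine ⟨Subtype.val '' V₀, ⟨⟨x, hx⟩, hxV₀, rfl⟩, ?_, ?_, ?_⟩
  · rintro _ ⟨y, hy, rfl⟩
    exact ⟨y.2, hV₀U hy⟩
  · exact (hV₀.1.isCompact).image continuous_subtype_val
  · have : F \ Subtype.val '' V₀ = Subtype.val '' (V₀ᶜ) := by
      ext z
      constructor
      · rintro ⟨hzF, hz⟩
        exact ⟨⟨z, hzF⟩, fun hmem => hz ⟨⟨z, hzF⟩, hmem, rfl⟩, rfl⟩
      · rintro ⟨y, hy, rfl⟩
        refine ⟨y.2, ?_⟩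
        rintro ⟨y', hy', hyy'⟩
        exact hy (Subtype.ext hyy' ▸ hy')
    rw [this]
    exact (hV₀.compl.1.isCompact).image continuous_subtype_val

/-- Key local lemma: if the connected component of `x` in `g ⁻¹' {g x}` is contained in an
open set `U`, then connected sets lying in a small "tube" `{z | dist (g z) (g x) ≤ δ}` and
meeting a small ball around `x` are contained in a small thickening of `U`. -/
lemma aux_key {X M : Type*} [MetricSpace X] [CompactSpace X] [MetricSpace M]
    (g : C(X, M)) (x : X) {U : Set X} (hU : IsOpen U)
    (hcc : connectedComponentIn (g ⁻¹' {g x}) x ⊆ U) (r₀ : ℝ) (hr₀ : 0 < r₀) :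
    ∃ δ > 0, ∃ r > 0, r ≤ r₀ ∧ ∀ S : Set X, IsPreconnected S →
      (∀ z ∈ S, dist (g z) (g x) ≤ δ) → (∃ y ∈ S, dist y x < r) →
      S ⊆ thickening r U := by
  have hFc : IsClosed (g ⁻¹' {g x}) := isClosed_singleton.preimage g.continuous
  have hF : IsCompact (g ⁻¹' {g x}) := hFc.isCompact
  have hxF : x ∈ g ⁻¹' {g x} := rfl
  obtain ⟨V, hxV, hVFU, hVcomp, hFVcomp⟩ := aux_clopen_piece hF hU hxF hcc
  have hdisj : Disjoint V ((g ⁻¹' {g x}) \ V) := disjoint_sdiff_right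
  obtain ⟨r₁, hr₁, hthick⟩ := hdisj.exists_thickenings hVcomp hFVcomp.isClosed
  set r : ℝ := min r₁ r₀ with hrdef
  have hr : 0 < r := lt_min hr₁ hr₀
  have hthick' : Disjoint (thickening r V) (thickening r ((g ⁻¹' {g x}) \ V)) :=
    hthick.mono (thickening_mono (min_le_left _ _) _) (thickening_mono (min_le_left _ _) _)
  set O : Set X := thickening r V ∪ thickening r ((g ⁻¹' {g x}) \ V) with hOdef
  have hOopen : IsOpen O := isOpen_thickening.union isOpen_thickening
  have hFO : g ⁻¹' {g x} ⊆ O := by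
    intro z hz
    by_cases hzV : z ∈ V
    · exact Or.inl (self_subset_thickening hr V hzV)
    · exact Or.inr (self_subset_thickening hr _ ⟨hz, hzV⟩)
  -- find δ
  have hK : IsCompact Oᶜ := (hOopen.isClosed_compl).isCompact
  obtain ⟨δ, hδ, hδO⟩ : ∃ δ > 0, ∀ z, dist (g z) (g x) ≤ δ → z ∈ O := by
    rcases eq_empty_or_nonempty Oᶜ with hne | hne
    · exact ⟨1, one_pos, fun z _ => by
        by_contra hz
        exact absurd (mem_compl hz) (by rw [hne]; exact notMem_empty z)⟩
    · have hcont : ContinuousOn (fun z => dist (g z) (g x)) Oᶜ :=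
        (continuous_dist.comp (g.continuous.prodMk continuous_const)).continuousOn
      obtain ⟨z₀, hz₀K, hz₀⟩ := hK.exists_isMinOn hne hcont
      have hz₀pos : 0 < dist (g z₀) (g x) := by
        rcases dist_pos.mpr (fun h : g z₀ = g x => hz₀K (hFO h)) with h
        exact h
      refine ⟨dist (g z₀) (g x) / 2, by positivity, fun z hz => ?_⟩
      by_contra hzO
      have := hz₀ (mem_compl hzO)
      simp only [mem_setOf_eq] at this
      have : dist (g z₀) (g x) ≤ dist (g z) (g x) := this
      linarith
  refine ⟨δ, hδ, r, hr, min_le_right _ _, fun S hS hSδ ⟨y, hyS, hyx⟩ => ?_⟩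
  have hSO : S ⊆ O := fun z hz => hδO z (hSδ z hz)
  have hyV : y ∈ thickening r V := by
    rw [mem_thickening_iff]
    exact ⟨x, hxV, hyx⟩
  rcases hS.subset_or_subset isOpen_thickening isOpen_thickening hthick' hSO with h | h
  · exact h.trans (thickening_subset_of_subset r (hVFU.trans inter_subset_right))
  · exact absurd (h hyS) (fun hmem => (disjoint_left.mp hthick') hyV hmem)

/-- A Hausdorff-type limit of compact connected sets is connected. -/
lemma aux_limit_connected {X : Type*} [MetricSpace X] (L : ℕ → Set X) (T : Set X)
    (hconn : ∀ k, IsPreconnected (L k)) (hT : IsCompact T) (hTne : T.Nonempty)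
    (hconv : ∀ r > 0, ∃ N, ∀ k ≥ N,
      L k ⊆ thickening r T ∧ T ⊆ thickening r (L k)) :
    IsConnected T := by
  refine ⟨hTne, ?_⟩
  rw [isPreconnected_iff_subset_of_fully_disjoint_closed hT.isClosed]
  intro u v hu hv hTuv huv
  set A : Set X := T ∩ u with hAdef
  set B : Set X := T ∩ v with hBdef
  have hAcomp : IsCompact A := hT.inter_right hu
  have hBcomp : IsCompact B := hT.inter_right hv
  have hABdisj : Disjoint A B := huv.mono inter_subset_right inter_subset_right
  have hTAB : T ⊆ A ∪ B := fun z hz => by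
    rcases hTuv hz with h | h
    · exact Or.inl ⟨hz, h⟩
    · exact Or.inr ⟨hz, h⟩
  rcases eq_empty_or_nonempty A with hA | hAne
  · refine Or.inr fun z hz => ?_
    rcases hTAB hz with h | h
    · exact absurd (hA ▸ h) (notMem_empty z)
    · exact h.2
  rcases eq_empty_or_nonempty B with hB | hBne
  · refine Or.inl fun z hz => ?_
    rcases hTAB hz with h | h
    · exact h.2
    · exact absurd (hB ▸ h) (notMem_empty z)
  · exfalso
    obtain ⟨r, hr, hdisj⟩ := hABdisj.exists_thickenings hAcomp hBcomp.isClosed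
    obtain ⟨N, hN⟩ := hconv r hr
    obtain ⟨hLT, hTL⟩ := hN N le_rfl
    obtain ⟨a, haA⟩ := hAne
    obtain ⟨b, hbB⟩ := hBne
    obtain ⟨a', ha'L, haa'⟩ := mem_thickening_iff.mp (hTL (hAdef ▸ haA).1)
    obtain ⟨b', hb'L, hbb'⟩ := mem_thickening_iff.mp (hTL (hBdef ▸ hbB).1)
    have ha'A : a' ∈ thickening r A := mem_thickening_iff.mpr ⟨a, haA, by rwa [dist_comm]⟩
    have hb'B : b' ∈ thickening r B := mem_thickening_iff.mpr ⟨b, hbB, by rwa [dist_comm]⟩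
    have hLsub : L N ⊆ thickening r A ∪ thickening r B := by
      refine hLT.trans ?_
      rw [← thickening_union]
      exact thickening_subset_of_subset r hTAB
    rcases (hconn N).subset_or_subset isOpen_thickening isOpen_thickening hdisj hLsub with h | h
    · exact (disjoint_left.mp hdisj) (h hb'L) hb'B
    · exact (disjoint_left.mp hdisj) ha'A (h ha'L)

theorem stmt_1 {X M : Type*} [MetricSpace X] [CompactSpace X] [MetricSpace M]
    [CompleteSpace M] (m n : ℕ) (hm : 0 < m) (hn : 0 < n) :
    IsOpen {g : C(X, M) | ∀ L : Set X, IsCompact L → IsConnected L →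
      Metric.diam (g '' L) ≥ 1 / (n : ℝ) →
      ∃ x ∈ L, connectedComponentIn (g ⁻¹' {g x}) x ⊆ Metric.thickening (1 / (m : ℝ)) L} := by
  rw [Metric.isOpen_iff]
  intro g hg
  simp only [mem_setOf_eq] at hg
  -- A uniform version of the property of `g`.
  have UC : ∃ ε > 0, ∀ L : Set X, IsCompact L → IsConnected L →
      Metric.diam (g '' L) ≥ 1 / (n : ℝ) - ε →
      ∃ x ∈ L, connectedComponentIn {z | dist (g z) (g x) ≤ ε} x ⊆
        Metric.thickening (1 / (m : ℝ)) L := by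
    by_contra hUC
    have hUC' : ∀ k : ℕ, ∃ L : Set X, IsCompact L ∧ IsConnected L ∧
        Metric.diam (g '' L) ≥ 1 / (n : ℝ) - 1/((k:ℝ)+1) ∧
        ∀ x ∈ L, ¬ connectedComponentIn {z | dist (g z) (g x) ≤ 1/((k:ℝ)+1)} x ⊆
          Metric.thickening (1 / (m : ℝ)) L := by
      intro k
      by_contra hk
      push_neg at hk
      exact hUC ⟨1/((k:ℝ)+1), by positivity, hk⟩
    choose L hLc hLconn hLd hLbad using hUC'
    set T : ℕ → TopologicalSpace.NonemptyCompacts X :=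
      fun k => ⟨⟨L k, hLc k⟩, (hLconn k).nonempty⟩ with hTdef
    obtain ⟨T' , -, φ, hφ, hconv⟩ :=
      (isCompact_univ (X := TopologicalSpace.NonemptyCompacts X)).tendsto_subseq
        (fun k => mem_univ (T k))
    have hfin : ∀ k, EMetric.hausdorffEdist (L k) (T' : Set X) ≠ ⊤ := fun k =>
      Metric.hausdorffEdist_ne_top_of_nonempty_of_bounded (hLconn k).nonempty T'.nonempty
        (hLc k).isBounded T'.isCompact.isBounded
    have key : ∀ r > 0, ∃ N, ∀ k ≥ N,
        L (φ k) ⊆ thickening r (T' : Set X) ∧ (T' : Set X) ⊆ thickening r (L (φ k)) := by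
      intro r hr
      obtain ⟨N, hN⟩ := Metric.tendsto_atTop.mp hconv r hr
      refine ⟨N, fun k hk => ?_⟩
      have hd : Metric.hausdorffDist (L (φ k)) (T' : Set X) < r := by
        have := hN k hk
        rwa [Function.comp_apply, Metric.NonemptyCompacts.dist_eq] at this
      constructor
      · intro z hz
        obtain ⟨y, hy, hzy⟩ := Metric.exists_dist_lt_of_hausdorffDist_lt hz hd (hfin (φ k))
        exact mem_thickening_iff.mpr ⟨y, hy, hzy⟩
      · intro z hz
        obtain ⟨y, hy, hzy⟩ := Metric.exists_dist_lt_of_hausdorffDist_lt' hz hd (hfin (φ k))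
        exact mem_thickening_iff.mpr ⟨y, hy, by rwa [dist_comm]⟩
    have hT'conn : IsConnected (T' : Set X) :=
      aux_limit_connected (fun k => L (φ k)) _ (fun k => (hLconn (φ k)).isPreconnected)
        T'.isCompact T'.nonempty key
    -- the limit has large image diameter
    have hT'diam : Metric.diam (g '' (T' : Set X)) ≥ 1 / (n : ℝ) := by
      rw [ge_iff_le]
      refine le_of_forall_pos_le_add ?_
      intro τ hτ
      have hu : UniformContinuous g := CompactSpace.uniformContinuous_of_continuous g.continuous
      obtain ⟨ρ, hρ, hρ'⟩ := Metric.uniformContinuous_iff.mp hu (τ/3) (by positivity)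
      obtain ⟨N₁, hN₁⟩ := key ρ hρ
      obtain ⟨N₂, hN₂⟩ := exists_nat_one_div_lt (show (0:ℝ) < τ/3 by positivity)
      set k := max N₁ N₂ with hkdef
      have h1 : L (φ k) ⊆ thickening ρ (T' : Set X) := (hN₁ k (le_max_left _ _)).1
      have hφk : (1:ℝ)/((φ k : ℝ)+1) < τ/3 := by
        have h3 : (N₂ : ℕ) ≤ φ k := le_trans (le_max_right N₁ N₂) hφ.le_apply
        calc (1:ℝ)/((φ k:ℝ)+1) ≤ 1/((N₂:ℝ)+1) := by
              apply one_div_le_one_div_of_le (by positivity)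
              have : ((N₂:ℝ)) ≤ ((φ k : ℕ) : ℝ) := Nat.cast_le.mpr h3
              linarith
          _ < τ/3 := hN₂
      have hbound : Bornology.IsBounded (g '' (T' : Set X)) :=
        (T'.isCompact.image g.continuous).isBounded
      have hdnn : (0:ℝ) ≤ Metric.diam (g '' (T' : Set X)) := Metric.diam_nonneg
      have hdb : Metric.diam (g '' L (φ k)) ≤ Metric.diam (g '' (T' : Set X)) + 2*(τ/3) := by
        apply Metric.diam_le_of_forall_dist_le (by linarith)
        rintro _ ⟨a, ha, rfl⟩ _ ⟨b, hb, rfl⟩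
        obtain ⟨a', ha', haa'⟩ := mem_thickening_iff.mp (h1 ha)
        obtain ⟨b', hb', hbb'⟩ := mem_thickening_iff.mp (h1 hb)
        have h4 : dist (g a) (g a') ≤ τ/3 := (hρ' haa').le
        have h5 := Metric.dist_le_diam_of_mem hbound ⟨a', ha', rfl⟩ ⟨b', hb', rfl⟩
        have h6 : dist (g b') (g b) ≤ τ/3 := by
          have : dist b' b < ρ := by rwa [dist_comm]
          exact (hρ' this).le
        calc dist (g a) (g b) ≤ dist (g a) (g a') + dist (g a') (g b') + dist (g b') (g b) :=
              dist_triangle4 _ _ _ _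
          _ ≤ Metric.diam (g '' (T' : Set X)) + 2*(τ/3) := by linarith
      have h7 := hLd (φ k)
      rw [ge_iff_le] at h7
      linarith
    obtain ⟨x, hxT, hsubx⟩ := hg (T' : Set X) T'.isCompact hT'conn hT'diam
    have hxF : x ∈ g ⁻¹' {g x} := rfl
    have hFcomp : IsCompact (g ⁻¹' {g x}) := (isClosed_singleton.preimage g.continuous).isCompact
    have hCcomp : IsCompact (connectedComponentIn (g ⁻¹' {g x}) x) := by
      rw [connectedComponentIn_eq_image hxF]
      haveI : CompactSpace (g ⁻¹' {g x}) := isCompact_iff_compactSpace.mp hFcomp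
      exact (isClosed_connectedComponent.isCompact).image continuous_subtype_val
    have hCne : (connectedComponentIn (g ⁻¹' {g x}) x).Nonempty :=
      ⟨x, mem_connectedComponentIn hxF⟩
    obtain ⟨y₀, hy₀C, hy₀max⟩ := hCcomp.exists_isMaxOn hCne
      (Metric.continuous_infDist_pt (T' : Set X)).continuousOn
    have hc : Metric.infDist y₀ (T' : Set X) < 1/(m:ℝ) := by
      have := hsubx hy₀C
      rwa [Metric.mem_thickening_iff_infDist_lt T'.nonempty] at this
    set c : ℝ := Metric.infDist y₀ (T' : Set X) with hcdef
    set σ : ℝ := (1/(m:ℝ) - c)/3 with hσdef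
    have hσ : 0 < σ := by rw [hσdef]; linarith
    have h3σ : 3*σ = 1/(m:ℝ) - c := by rw [hσdef]; ring
    have hCU : connectedComponentIn (g ⁻¹' {g x}) x ⊆ thickening (c + σ) (T' : Set X) := by
      intro y hy
      rw [Metric.mem_thickening_iff_infDist_lt T'.nonempty]
      have h8 : Metric.infDist y (T' : Set X) ≤ c := hy₀max hy
      linarith
    obtain ⟨δ, hδ, r, hr, hrσ, hkey⟩ := aux_key g x isOpen_thickening hCU σ hσ
    obtain ⟨ν, hν, hν'⟩ := Metric.continuous_iff.mp g.continuous x (δ/2) (half_pos hδ)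
    obtain ⟨N₁, hN₁⟩ := key (min r ν) (lt_min hr hν)
    obtain ⟨N₂, hN₂⟩ := key σ hσ
    obtain ⟨N₃, hN₃⟩ := exists_nat_one_div_lt (half_pos hδ)
    set k := max (max N₁ N₂) N₃ with hkdef
    have hk1 := hN₁ k (le_trans (le_max_left _ _) (le_max_left _ _))
    have hk2 := hN₂ k (le_trans (le_max_right _ _) (le_max_left _ _))
    have hφk : (1:ℝ)/((φ k : ℝ)+1) ≤ δ/2 := by
      have h3 : (N₃ : ℕ) ≤ φ k := le_trans (le_max_right _ _) hφ.le_apply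
      calc (1:ℝ)/((φ k:ℝ)+1) ≤ 1/((N₃:ℝ)+1) := by
            apply one_div_le_one_div_of_le (by positivity)
            have : ((N₃:ℝ)) ≤ ((φ k : ℕ) : ℝ) := Nat.cast_le.mpr h3
            linarith
        _ ≤ δ/2 := hN₃.le
    obtain ⟨xk, hxkL, hxxk⟩ := mem_thickening_iff.mp (hk1.2 hxT)
    have hxkx : dist xk x < min r ν := by rwa [dist_comm]
    apply hLbad (φ k) xk hxkL
    have hbase : xk ∈ {z | dist (g z) (g xk) ≤ 1/((φ k:ℝ)+1)} := by
      simp only [mem_setOf_eq, dist_self]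
      positivity
    have htube : ∀ z ∈ connectedComponentIn {z | dist (g z) (g xk) ≤ 1/((φ k:ℝ)+1)} xk,
        dist (g z) (g x) ≤ δ := by
      intro z hz
      have hz1 : z ∈ {z | dist (g z) (g xk) ≤ 1/((φ k:ℝ)+1)} :=
        connectedComponentIn_subset _ _ hz
      rw [mem_setOf_eq] at hz1
      have hz2 : dist (g xk) (g x) < δ/2 :=
        hν' xk (lt_of_lt_of_le hxkx (min_le_right _ _))
      calc dist (g z) (g x) ≤ dist (g z) (g xk) + dist (g xk) (g x) := dist_triangle _ _ _
        _ ≤ δ := by linarith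
    have hstep := hkey (connectedComponentIn {z | dist (g z) (g xk) ≤ 1/((φ k:ℝ)+1)} xk)
      isPreconnected_connectedComponentIn htube
      ⟨xk, mem_connectedComponentIn hbase, lt_of_lt_of_le hxkx (min_le_left _ _)⟩
    refine hstep.trans ?_
    calc thickening r (thickening (c + σ) (T' : Set X))
        ⊆ thickening (r + (c + σ)) (T' : Set X) := thickening_thickening_subset _ _ _
      _ ⊆ thickening (r + (c + σ)) (thickening σ (L (φ k))) :=
          thickening_subset_of_subset _ hk2.2
      _ ⊆ thickening (r + (c + σ) + σ) (L (φ k)) := thickening_thickening_subset _ _ _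
      _ ⊆ thickening (1/(m:ℝ)) (L (φ k)) := thickening_mono (by linarith) _
  -- Now use the uniform property to conclude openness.
  obtain ⟨ε, hε, hUC⟩ := UC
  refine ⟨ε/2, by positivity, ?_⟩
  intro h hball
  rw [Metric.mem_ball] at hball
  intro L hLc hLconn hdiam
  have hd : ∀ z : X, dist (h z) (g z) ≤ dist h g := fun z =>
    ContinuousMap.dist_apply_le_dist z
  have hdiam' : Metric.diam (g '' L) ≥ 1/(n:ℝ) - ε := by
    have hgb : Bornology.IsBounded (g '' L) := (hLc.image g.continuous).isBounded
    have hdnn : (0:ℝ) ≤ Metric.diam (g '' L) := Metric.diam_nonneg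
    have hstep : Metric.diam (h '' L) ≤ Metric.diam (g '' L) + ε := by
      apply Metric.diam_le_of_forall_dist_le (by linarith)
      rintro _ ⟨a, ha, rfl⟩ _ ⟨b, hb, rfl⟩
      have h1 := hd a
      have h2 := hd b
      have h3 := Metric.dist_le_diam_of_mem hgb ⟨a, ha, rfl⟩ ⟨b, hb, rfl⟩
      calc dist (h a) (h b) ≤ dist (h a) (g a) + dist (g a) (g b) + dist (g b) (h b) :=
            dist_triangle4 _ _ _ _
        _ ≤ Metric.diam (g '' L) + ε := by
            have h4 : dist (g b) (h b) = dist (h b) (g b) := dist_comm _ _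
            linarith
    rw [ge_iff_le] at hdiam ⊢
    linarith
  obtain ⟨x, hxL, hsub⟩ := hUC L hLc hLconn hdiam'
  refine ⟨x, hxL, subset_trans ?_ hsub⟩
  apply connectedComponentIn_mono
  intro z hz
  simp only [mem_preimage, mem_singleton_iff] at hz
  show dist (g z) (g x) ≤ ε
  have h1 := hd z
  have h2 := hd x
  calc dist (g z) (g x) ≤ dist (g z) (h z) + dist (h z) (h x) + dist (h x) (g x) :=
        dist_triangle4 _ _ _ _
    _ ≤ ε := by
        have h0 : dist (h z) (h x) = 0 := by rw [hz, dist_self]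
        have h3 : dist (g z) (h z) = dist (h z) (g z) := dist_comm _ _
        linarith
end

section
/- If M₁ and M₂ are Krasinkiewicz metric spaces, then the product M₁ × M₂ is a Krasinkiewicz space. -/
/-- A continuous map from a compact metric space is a Krasinkiewicz map if every
subcontinuum is either contained in a fiber or contains a component of a fiber. -/
def IsKrasMap {X M : Type*} [TopologicalSpace X] [TopologicalSpace M] (g : X → M) : Prop :=
  ∀ K : Set X, IsCompact K → IsConnected K →
    (g '' K).Subsingleton ∨ ∃ x ∈ K, connectedComponentIn (g ⁻¹' {g x}) x ⊆ K

/-- A metric space `M` is a Krasinkiewicz space if for every compact metric space `X`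
the Krasinkiewicz maps are dense in `C(X, M)` (uniform convergence topology). -/
def IsKrasSpace (M : Type*) [MetricSpace M] : Prop :=
  ∀ (X : Type) (_ : MetricSpace X) (_ : CompactSpace X),
    Dense {g : C(X, M) | IsKrasMap (g : X → M)}

lemma isKrasMap_pair {X M₁ M₂ : Type*} [TopologicalSpace X] [TopologicalSpace M₁]
    [TopologicalSpace M₂] {g₁ : X → M₁} {g₂ : X → M₂}
    (hg₁ : IsKrasMap g₁) (hg₂ : IsKrasMap g₂) :
    IsKrasMap (fun x => (g₁ x, g₂ x)) := by
  intro K hKc hKconn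
  have hsub₁ : ∀ x : X, (fun x => (g₁ x, g₂ x)) ⁻¹' {(g₁ x, g₂ x)} ⊆ g₁ ⁻¹' {g₁ x} := by
    intro x y hy
    simp only [Set.mem_preimage, Set.mem_singleton_iff, Prod.mk.injEq] at hy ⊢
    exact hy.1
  have hsub₂ : ∀ x : X, (fun x => (g₁ x, g₂ x)) ⁻¹' {(g₁ x, g₂ x)} ⊆ g₂ ⁻¹' {g₂ x} := by
    intro x y hy
    simp only [Set.mem_preimage, Set.mem_singleton_iff, Prod.mk.injEq] at hy ⊢
    exact hy.2
  rcases hg₁ K hKc hKconn with hs₁ | ⟨x, hxK, hx⟩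
  · rcases hg₂ K hKc hKconn with hs₂ | ⟨x, hxK, hx⟩
    · left
      rintro _ ⟨a, haK, rfl⟩ _ ⟨b, hbK, rfl⟩
      exact Prod.ext (hs₁ ⟨a, haK, rfl⟩ ⟨b, hbK, rfl⟩) (hs₂ ⟨a, haK, rfl⟩ ⟨b, hbK, rfl⟩)
    · right
      exact ⟨x, hxK, (connectedComponentIn_mono x (hsub₂ x)).trans hx⟩
  · right
    exact ⟨x, hxK, (connectedComponentIn_mono x (hsub₁ x)).trans hx⟩

theorem stmt_3 {M₁ M₂ : Type*} [MetricSpace M₁] [MetricSpace M₂]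
    (h₁ : IsKrasSpace M₁) (h₂ : IsKrasSpace M₂) : IsKrasSpace (M₁ × M₂) := by
  intro X _ _
  rw [Metric.dense_iff]
  intro g r hr
  set g₁ : C(X, M₁) := ⟨fun x => (g x).1, (continuous_fst.comp g.continuous)⟩ with hg₁def
  set g₂ : C(X, M₂) := ⟨fun x => (g x).2, (continuous_snd.comp g.continuous)⟩ with hg₂def
  obtain ⟨f₁, hf₁ball, hf₁⟩ := (Metric.dense_iff.mp (h₁ X ‹_› ‹_›)) g₁ r hr
  obtain ⟨f₂, hf₂ball, hf₂⟩ := (Metric.dense_iff.mp (h₂ X ‹_› ‹_›)) g₂ r hr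
  refine ⟨⟨fun x => (f₁ x, f₂ x), (f₁.continuous.prodMk f₂.continuous)⟩, ?_, ?_⟩
  · rw [Metric.mem_ball, ContinuousMap.dist_lt_iff hr]
    intro x
    rw [Prod.dist_eq]
    refine max_lt ?_ ?_
    · exact lt_of_le_of_lt (ContinuousMap.dist_apply_le_dist (f := f₁) (g := g₁) x)
        (by simpa [Metric.mem_ball] using hf₁ball)
    · exact lt_of_le_of_lt (ContinuousMap.dist_apply_le_dist (f := f₂) (g := g₂) x)
        (by simpa [Metric.mem_ball] using hf₂ball)
  · exact isKrasMap_pair hf₁ hf₂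
end

section
/- Let X be a compact metric space and g₁ : X → M₁, g₂ : X → M₂ continuous maps. If both g₁ and g₂ are Krasinkiewicz maps, then the diagonal product g = g₁ △ g₂ : X → M₁ × M₂, g(x) = (g₁(x), g₂(x)), is a Krasinkiewicz map. -/
theorem stmt_4 {X M₁ M₂ : Type*} [MetricSpace X] [CompactSpace X]
    [MetricSpace M₁] [MetricSpace M₂]
    (g₁ : X → M₁) (g₂ : X → M₂) (hc₁ : Continuous g₁) (hc₂ : Continuous g₂)
    (h₁ : IsKrasMap g₁) (h₂ : IsKrasMap g₂) :
    IsKrasMap (fun x => (g₁ x, g₂ x)) := by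
  intro K hKc hKconn
  rcases h₁ K hKc hKconn with hs1 | ⟨x, hxK, hC1⟩
  · rcases h₂ K hKc hKconn with hs2 | ⟨y, hyK, hD⟩
    · left
      rintro _ ⟨a, ha, rfl⟩ _ ⟨b, hb, rfl⟩
      exact Prod.ext (hs1 ⟨a, ha, rfl⟩ ⟨b, hb, rfl⟩) (hs2 ⟨a, ha, rfl⟩ ⟨b, hb, rfl⟩)
    · right
      refine ⟨y, hyK, subset_trans ?_ hD⟩
      apply connectedComponentIn_mono
      intro z hz
      simp only [Set.mem_preimage, Set.mem_singleton_iff] at hz ⊢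
      exact congrArg Prod.snd hz
  · right
    refine ⟨x, hxK, subset_trans ?_ hC1⟩
    apply connectedComponentIn_mono
    intro z hz
    simp only [Set.mem_preimage, Set.mem_singleton_iff] at hz ⊢
    exact congrArg Prod.fst hz
end

section
/- Every open subset of a Krasinkiewicz metric space is a Krasinkiewicz space. -/
theorem stmt_5 {M : Type*} [MetricSpace M] (h : IsKrasSpace M)
    (U : Set M) (hU : IsOpen U) : IsKrasSpace ↥U := by
  intro X _ _
  rw [Metric.dense_iff]
  intro g ε hε
  set f0 : C(X, M) := ⟨fun x => (g x : M), by continuity⟩ with hf0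
  have hscomp : IsCompact (Set.range f0) := isCompact_range f0.continuous
  have hsub : Set.range f0 ⊆ U := by rintro _ ⟨x, rfl⟩; exact (g x).2
  obtain ⟨δ, hδ, hthick⟩ := hscomp.exists_thickening_subset_open hU hsub
  have hδ'0 : 0 < min δ ε := lt_min hδ hε
  obtain ⟨k, hkball, hkKras⟩ := Metric.dense_iff.mp (h X ‹_› ‹_›) f0 (min δ ε) hδ'0
  have hdist : ∀ x : X, dist (k x) (g x : M) < min δ ε := fun x =>
    lt_of_le_of_lt (ContinuousMap.dist_apply_le_dist (f := k) (g := f0) x) (Metric.mem_ball.mp hkball)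
  have hmem : ∀ x : X, k x ∈ U := by
    intro x
    apply hthick
    rw [Metric.mem_thickening_iff]
    exact ⟨f0 x, Set.mem_range_self x, lt_of_lt_of_le (hdist x) (min_le_left _ _)⟩
  set k' : C(X, ↥U) := ⟨fun x => ⟨k x, hmem x⟩, (map_continuous k).subtype_mk _⟩ with hk'
  refine ⟨k', Metric.mem_ball.mpr ((ContinuousMap.dist_lt_iff hε).mpr fun x => ?_), ?_⟩
  · rw [Subtype.dist_eq]
    exact lt_of_lt_of_le (hdist x) (min_le_right _ _)
  · intro K hK hKc
    rcases hkKras K hK hKc with hsub1 | ⟨x, hxK, hcomp⟩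
    · left
      intro a ha b hb
      obtain ⟨xa, hxa, rfl⟩ := ha
      obtain ⟨xb, hxb, rfl⟩ := hb
      exact Subtype.ext (hsub1 ⟨xa, hxa, rfl⟩ ⟨xb, hxb, rfl⟩)
    · right
      refine ⟨x, hxK, ?_⟩
      have : (k' : X → ↥U) ⁻¹' {k' x} = k ⁻¹' {k x} := by
        ext y
        simp [hk', Subtype.ext_iff]
      rw [this]
      exact hcomp
end

section
/- Let M be a metric space such that every compact subset of M is contained in some subspace of M that is a Krasinkiewicz space. Then M is a Krasinkiewicz space. -/
theorem stmt_6 {M : Type*} [MetricSpace M]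
    (h : ∀ K : Set M, IsCompact K → ∃ S : Set M, K ⊆ S ∧ IsKrasSpace ↥S) :
    IsKrasSpace M := by
  intro X _ _
  rw [Metric.dense_iff]
  intro f ε hε
  obtain ⟨S, hKS, hS⟩ := h (Set.range f) (isCompact_range f.continuous)
  have hf' : ∀ x, f x ∈ S := fun x => hKS ⟨x, rfl⟩
  let f' : C(X, ↥S) := ⟨fun x => ⟨f x, hf' x⟩, f.continuous.subtype_mk _⟩
  obtain ⟨g', hg'ball, hg'⟩ := (Metric.dense_iff.mp (hS X ‹_› ‹_›) f' ε hε)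
  let ι : C(↥S, M) := ⟨Subtype.val, continuous_subtype_val⟩
  refine ⟨ι.comp g', ?_, ?_⟩
  · rw [Metric.mem_ball, ContinuousMap.dist_lt_iff hε]
    intro x
    calc dist ((ι.comp g') x) (f x) = dist (f' x) (g' x) := by
          simp [f', ι, Subtype.dist_eq, dist_comm]
      _ ≤ dist f' g' := ContinuousMap.dist_apply_le_dist x
      _ < ε := by simpa [Metric.mem_ball, dist_comm] using hg'ball
  · intro K hK hKc
    rcases hg' K hK hKc with h1 | ⟨x, hx, h2⟩
    · left
      have : (ι.comp g') '' K = Subtype.val '' (g' '' K) := by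
        simp [ι, Set.image_image]
      rw [this]
      exact h1.image _
    · right
      refine ⟨x, hx, ?_⟩
      have hfib : (ι.comp g') ⁻¹' {(ι.comp g') x} = g' ⁻¹' {g' x} := by
        ext y
        simp [ι, Subtype.ext_iff]
      rwa [hfib]
end

section
/- Let M be a completely metrizable space such that for every ε > 0 there exist a Krasinkiewicz space Z, a continuous map r : M → Z, and a light continuous map φ : Z → M such that φ ∘ r is ε-close to the identity of M. Then M is a Krasinkiewicz space. -/
lemma isKrasMap_comp_light {X Z M : Type*} [TopologicalSpace X] [TopologicalSpace Z]
    [TopologicalSpace M] {g : X → Z} {φ : Z → M} (hg : IsKrasMap g) (hgc : Continuous g)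
    (hφ : ∀ y : M, IsTotallyDisconnected (φ ⁻¹' {y})) :
    IsKrasMap (φ ∘ g) := by
  intro K hK hKc
  rcases hg K hK hKc with h1 | ⟨x, hxK, hsub⟩
  · left
    rw [Set.image_comp]
    exact h1.image φ
  · right
    refine ⟨x, hxK, ?_⟩
    set F := (φ ∘ g) ⁻¹' {φ (g x)} with hF
    have hxF : x ∈ F := rfl
    have hD : IsPreconnected (connectedComponentIn F x) := isPreconnected_connectedComponentIn
    have himg : (g '' connectedComponentIn F x).Subsingleton := by
      apply hφ (φ (g x))
      · rintro _ ⟨a, ha, rfl⟩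
        exact connectedComponentIn_subset F x ha
      · exact hD.image g hgc.continuousOn
    have hDfib : connectedComponentIn F x ⊆ g ⁻¹' {g x} := by
      intro a ha
      have hx' : g x ∈ g '' connectedComponentIn F x :=
        ⟨x, mem_connectedComponentIn hxF, rfl⟩
      exact himg ⟨a, ha, rfl⟩ hx'
    exact (hD.subset_connectedComponentIn (mem_connectedComponentIn hxF) hDfib).trans hsub

theorem stmt_7 {M : Type} [MetricSpace M] [CompleteSpace M]
    (h : ∀ ε : ℝ, 0 < ε → ∃ (Z : Type) (_ : MetricSpace Z), IsKrasSpace Z ∧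
      ∃ (r : M → Z) (φ : Z → M), Continuous r ∧ Continuous φ ∧
        (∀ y : M, IsTotallyDisconnected (φ ⁻¹' {y})) ∧
        ∀ x : M, dist (φ (r x)) x < ε) :
    IsKrasSpace M := by
  intro X _ _
  rw [Metric.dense_iff]
  intro f ε hε
  obtain ⟨Z, _, hZ, r, φ, hrc, hφc, hlight, hclose⟩ := h (ε / 2) (by linarith)
  set φc : C(Z, M) := ⟨φ, hφc⟩ with hφcdef
  set rf : C(X, Z) := ⟨r ∘ f, hrc.comp f.continuous⟩ with hrfdef
  have hΦ : Continuous (φc.comp : C(X, Z) → C(X, M)) := φc.continuous_postcomp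
  obtain ⟨δ, hδpos, hδ⟩ := Metric.continuous_iff.mp hΦ rf (ε / 2) (by linarith)
  obtain ⟨g, hgball, hgK⟩ := Metric.dense_iff.mp (hZ X ‹_› ‹_›) rf δ hδpos
  have hmid : dist (φc.comp rf) f < ε / 2 := by
    rw [ContinuousMap.dist_lt_iff (by linarith)]
    intro x
    exact hclose (f x)
  refine ⟨φc.comp g, ?_, ?_⟩
  · rw [Metric.mem_ball]
    calc dist (φc.comp g) f ≤ dist (φc.comp g) (φc.comp rf) + dist (φc.comp rf) f :=
          dist_triangle _ _ _
      _ < ε / 2 + ε / 2 := add_lt_add (hδ g (Metric.mem_ball.mp hgball)) hmid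
      _ = ε := by ring
  · show IsKrasMap (φ ∘ g)
    exact isKrasMap_comp_light hgK g.continuous hlight
end

section
/- Let X be a compact metric space, Z a metric space, M a metric space, h : X → Z a Krasinkiewicz map, and φ : Z → M a light continuous map. Then φ ∘ h : X → M is a Krasinkiewicz map. -/
theorem stmt_8 {X Z M : Type*} [MetricSpace X] [CompactSpace X]
    [MetricSpace Z] [MetricSpace M]
    (h : X → Z) (φ : Z → M) (hh : Continuous h) (hφ : Continuous φ)
    (hKras : IsKrasMap h)
    (hlight : ∀ y : M, IsTotallyDisconnected (φ ⁻¹' {y})) :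
    IsKrasMap (φ ∘ h) := by
  intro K hKc hKconn
  rcases hKras K hKc hKconn with hsub | ⟨x, hxK, hcomp⟩
  · left
    rw [Set.image_comp]
    exact hsub.image φ
  · right
    refine ⟨x, hxK, ?_⟩
    set F : Set X := (φ ∘ h) ⁻¹' {(φ ∘ h) x} with hF
    have hxF : x ∈ F := rfl
    set D := connectedComponentIn F x with hD
    have hxD : x ∈ D := mem_connectedComponentIn hxF
    have hDpre : IsPreconnected D := isPreconnected_connectedComponentIn
    -- h '' D is a preconnected subset of the fiber of φ, hence a subsingleton
    have hhD : (h '' D).Subsingleton := by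
      apply hlight (φ (h x)) (h '' D)
      · rintro z ⟨a, haD, rfl⟩
        have : a ∈ F := connectedComponentIn_subset F x haD
        exact this
      · exact hDpre.image h (hh.continuousOn)
    -- hence D ⊆ h ⁻¹' {h x}
    have hDsub : D ⊆ h ⁻¹' {h x} := by
      intro a haD
      have : h a = h x := hhD ⟨a, haD, rfl⟩ ⟨x, hxD, rfl⟩
      exact this
    have : D ⊆ connectedComponentIn (h ⁻¹' {h x}) x :=
      hDpre.subset_connectedComponentIn hxD hDsub
    exact this.trans hcomp
end

section
/- Let Y be a non-degenerate metric continuum containing an open subset U such that U contains no arc, let L ⊆ U be a non-degenerate subcontinuum, δ = diam L, and ε = min{δ/2, dist(L, Y \ U)}. Then no continuous map q : Y × [0,1] → Y that is ε-close to the projection p(y,t) = y is a Krasinkiewicz map. -/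
/-- A set contains an arc if there is a topological embedding of `[0,1]` with range in it. -/
def ContainsArc {Y : Type*} [TopologicalSpace Y] (S : Set Y) : Prop :=
  ∃ e : unitInterval → Y, Continuous e ∧ Function.Injective e ∧ Set.range e ⊆ S

/-!
Since `ε ≤ dist(L, Y \ U)` and `q` moves points by less than `ε`, `q` maps `L × [0,1]` into
`U`. The image of a nonconstant path contains an arc and `U` contains none, so every vertical
path `t ↦ q (y, t)` with `y ∈ L` is constant. The fibre component of `q` through any point of
`L × {0}` therefore contains a whole segment `{y} × [0,1]`, while `q` does not collapse `L × {0}`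
to a point because it moves points by less than `ε ≤ diam L / 2`: the continuum `L × {0}`
violates the Krasinkiewicz condition.

Arcs in path images: by Zorn there is a minimal closed `K ⊆ [a, b]` containing `a` and `b` such
that `γ` agrees at the two ends of every gap of `K`. Pushing each point of `[a, b]` down to `K`
turns `γ` into a path whose fibres are intervals, and the quotient of `[a, b]` by these
intervals is again an interval.
-/

open Set Metric Function Topology TopologicalSpace

theorem ContainsArc.mono {Y : Type*} [TopologicalSpace Y] {S T : Set Y} (hS : ContainsArc S)
    (hST : S ⊆ T) : ContainsArc T :=
  let ⟨e, he, hinj, hrange⟩ := hS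
  ⟨e, he, hinj, hrange.trans hST⟩

theorem containsArc_range_of_quotient {X Y : Type*} [TopologicalSpace X] [CompactSpace X]
    [TopologicalSpace Y] {f : X → Y} {φ : X → unitInterval} (hf : Continuous f)
    (hφ : Continuous φ) (hφs : Surjective φ) (hfib : ∀ x x', φ x = φ x' ↔ f x = f x') :
    ContainsArc (range f) := by
  have hfactor : (f ∘ surjInv hφs) ∘ φ = f :=
    funext fun x => (hfib _ _).1 (surjInv_eq hφs (φ x))
  refine ⟨f ∘ surjInv hφs, ?_, fun z z' hzz' => ?_, range_comp_subset_range _ _⟩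
  · rw [(IsQuotientMap.of_surjective_continuous hφs hφ).continuous_iff, hfactor]
    exact hf
  · rw [← surjInv_eq hφs z, ← surjInv_eq hφs z']
    exact (hfib _ _).2 hzz'

lemma image_Icc_eq_of_eq {α : Type*} {h : ℝ → α} {s t b : ℝ}
    (hconv : ∀ y, (h ⁻¹' {y}).OrdConnected) (hst : s ≤ t) (htb : t ≤ b) (heq : h s = h t) :
    h '' Icc s b = h '' Icc t b := by
  refine (image_mono (Icc_subset_Icc_left hst)).antisymm' ?_
  rintro _ ⟨x, hx, rfl⟩
  rcases le_total x t with hxt | htx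
  · have : h x = h s := (hconv (h s)).out rfl heq.symm ⟨hx.1, hxt⟩
    exact ⟨t, ⟨le_rfl, htb⟩, by rw [this, heq]⟩
  · exact ⟨x, ⟨htx, hx.2⟩, rfl⟩

lemma image_max_Icc {α : Type*} {a b t : ℝ} (h : ℝ → α) (ht : t ∈ Icc a b) :
    (fun x => h (max t x)) '' Icc a b = h '' Icc t b := by
  ext y
  constructor
  · rintro ⟨x, hx, rfl⟩
    exact ⟨max t x, ⟨le_max_left _ _, max_le ht.2 hx.2⟩, rfl⟩
  · rintro ⟨x, hx, rfl⟩
    exact ⟨x, ⟨ht.1.trans hx.1, hx.2⟩, by simp only [max_eq_right hx.1]⟩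

lemma infDist_eq_sInf {Y : Type*} [PseudoMetricSpace Y] (y : Y) (S : Set Y) :
    infDist y S = sInf (dist y '' S) := by
  rw [infDist_eq_iInf, sInf_image']

section Collapse

variable {Y : Type*} [MetricSpace Y] {h : ℝ → Y} {a b s t : ℝ}

noncomputable def arcCoordTerm (h : ℝ → Y) (b t : ℝ) (n : ℕ) : ℝ :=
  min (infDist (h (denseSeq ℝ n)) (h '' Icc t b)) 1

/-- The points `h (denseSeq ℝ n)` are dense in the range of `h`, so `arcCoord h b t` strictly
increases whenever `h '' Icc t b` shrinks. -/
noncomputable def arcCoord (h : ℝ → Y) (b t : ℝ) : ℝ :=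
  ∑' n, (1 / 2 : ℝ) ^ n * arcCoordTerm h b t n

lemma arcCoordTerm_nonneg (n : ℕ) : 0 ≤ arcCoordTerm h b t n :=
  le_min infDist_nonneg zero_le_one

lemma abs_weighted_arcCoordTerm_le (n : ℕ) :
    |(1 / 2 : ℝ) ^ n * arcCoordTerm h b t n| ≤ (1 / 2) ^ n := by
  rw [abs_of_nonneg (mul_nonneg (by positivity) (arcCoordTerm_nonneg _))]
  exact mul_le_of_le_one_right (by positivity) (min_le_right _ _)

lemma summable_arcCoord : Summable fun n => (1 / 2 : ℝ) ^ n * arcCoordTerm h b t n :=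
  summable_geometric_two.of_norm_bounded fun _ => abs_weighted_arcCoordTerm_le _

lemma arcCoordTerm_mono (hst : s ≤ t) (htb : t ≤ b) (n : ℕ) :
    arcCoordTerm h b s n ≤ arcCoordTerm h b t n :=
  min_le_min_right _ <| infDist_le_infDist_of_subset
    (image_mono (Icc_subset_Icc_left hst)) ⟨h t, t, ⟨le_rfl, htb⟩, rfl⟩

lemma arcCoord_mono (hst : s ≤ t) (htb : t ≤ b) : arcCoord h b s ≤ arcCoord h b t :=
  summable_arcCoord.tsum_le_tsum
    (fun n => mul_le_mul_of_nonneg_left (arcCoordTerm_mono hst htb n) (by positivity))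
    summable_arcCoord

lemma continuousOn_infDist_image_Icc (hh : Continuous h) (y : Y) :
    ContinuousOn (fun t => infDist y (h '' Icc t b)) (Icc a b) := by
  have hcont : Continuous fun t => sInf ((fun x => dist y (h (max t x))) '' Icc a b) :=
    isCompact_Icc.continuous_sInf (by fun_prop)
  refine hcont.continuousOn.congr fun t ht => ?_
  dsimp only
  rw [infDist_eq_sInf, ← image_max_Icc h ht, image_image]

lemma continuousOn_arcCoord (hh : Continuous h) : ContinuousOn (arcCoord h b) (Icc a b) :=
  continuousOn_tsum
    (fun _ => continuousOn_const.mul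
      ((continuousOn_infDist_image_Icc hh _).inf continuousOn_const))
    summable_geometric_two fun n _ _ => abs_weighted_arcCoordTerm_le n

lemma arcCoord_eq_of_eq (hconv : ∀ y, (h ⁻¹' {y}).OrdConnected) (hst : s ≤ t) (htb : t ≤ b)
    (heq : h s = h t) : arcCoord h b s = arcCoord h b t := by
  simp only [arcCoord, arcCoordTerm, image_Icc_eq_of_eq hconv hst htb heq]

lemma arcCoord_lt_of_ne (hh : Continuous h) (hconv : ∀ y, (h ⁻¹' {y}).OrdConnected)
    (hst : s < t) (htb : t ≤ b) (hne : h s ≠ h t) : arcCoord h b s < arcCoord h b t := by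
  set B := h '' Icc t b
  have hsB : h s ∉ B := by
    rintro ⟨x, hx, hxs⟩
    exact hne ((hconv (h s)).out rfl hxs ⟨hst.le, hx.1⟩).symm
  have hBne : B.Nonempty := ⟨h t, t, ⟨le_rfl, htb⟩, rfl⟩
  set d := min (infDist (h s) B) 1
  have hd : 0 < d :=
    lt_min (((isCompact_Icc.image hh).isClosed.notMem_iff_infDist_pos hBne).1 hsB) one_pos
  obtain ⟨n, hn⟩ := (denseRange_denseSeq ℝ).exists_mem_open
    (isOpen_ball.preimage hh) ⟨s, (mem_ball_self (half_pos hd) : h s ∈ ball (h s) (d / 2))⟩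
  have hclose : dist (h (denseSeq ℝ n)) (h s) < d / 2 := hn
  have hsmall : arcCoordTerm h b s n < d / 2 :=
    (min_le_left _ _).trans_lt <|
      (infDist_le_dist_of_mem
        (mem_image_of_mem h (⟨le_rfl, hst.le.trans htb⟩ : s ∈ Icc s b))).trans_lt hclose
  have hlarge : d / 2 ≤ arcCoordTerm h b t n := by
    refine le_min ?_ (by linarith [min_le_right (infDist (h s) B) 1])
    have := infDist_le_infDist_add_dist (x := h s) (y := h (denseSeq ℝ n)) (s := B)
    rw [dist_comm] at this
    linarith [min_le_left (infDist (h s) B) 1]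
  exact Summable.tsum_lt_tsum_of_nonneg
    (fun _ => mul_nonneg (by positivity) (arcCoordTerm_nonneg _))
    (fun m => mul_le_mul_of_nonneg_left (arcCoordTerm_mono hst.le htb m) (by positivity))
    (mul_lt_mul_of_pos_left (hsmall.trans_le hlarge) (by positivity)) summable_arcCoord

lemma arcCoord_eq_iff (hh : Continuous h) (hconv : ∀ y, (h ⁻¹' {y}).OrdConnected)
    (hsb : s ≤ b) (htb : t ≤ b) : arcCoord h b s = arcCoord h b t ↔ h s = h t := by
  wlog hst : s ≤ t generalizing s t
  · rw [eq_comm, eq_comm (a := h s)]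
    exact this htb hsb (le_of_not_ge hst)
  refine ⟨fun hG => by_contra fun hne => ?_, arcCoord_eq_of_eq hconv hst htb⟩
  exact (arcCoord_lt_of_ne hh hconv (hst.lt_of_ne (ne_of_apply_ne h hne)) htb hne).ne hG

theorem containsArc_image_Icc_of_ordConnected (hh : Continuous h)
    (hconv : ∀ y, (h ⁻¹' {y}).OrdConnected) (hab : a ≤ b) (hne : h a ≠ h b) :
    ContainsArc (h '' Icc a b) := by
  have hGab : arcCoord h b a < arcCoord h b b :=
    arcCoord_lt_of_ne hh hconv (hab.lt_of_ne (ne_of_apply_ne h hne)) le_rfl hne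
  let G : Icc a b → Icc (arcCoord h b a) (arcCoord h b b) := fun t =>
    ⟨arcCoord h b t, arcCoord_mono t.2.1 t.2.2, arcCoord_mono t.2.2 le_rfl⟩
  let φ : Icc a b → unitInterval := iccHomeoI _ _ hGab ∘ G
  have hφ : Continuous φ := (iccHomeoI _ _ hGab).continuous.comp
    ((continuousOn_arcCoord hh).domRestrict.subtype_mk _)
  have hGs : Surjective G := by
    rintro ⟨z, hz⟩
    obtain ⟨x, hx, hxz⟩ := intermediate_value_Icc hab (continuousOn_arcCoord hh) hz
    exact ⟨⟨x, hx⟩, Subtype.ext hxz⟩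
  rw [image_eq_range]
  refine containsArc_range_of_quotient (hh.comp continuous_subtype_val) hφ
    ((iccHomeoI _ _ hGab).surjective.comp hGs) fun s t => ?_
  rw [← arcCoord_eq_iff hh hconv s.2.2 t.2.2, ← Subtype.ext_iff (a1 := G s) (a2 := G t)]
  exact (iccHomeoI _ _ hGab).injective.eq_iff

end Collapse

section Skeleton

variable {Y : Type*} {γ : ℝ → Y} {a b : ℝ} {K : Set ℝ}

structure IsGapSkeleton (γ : ℝ → Y) (a b : ℝ) (K : Set ℝ) : Prop where
  isClosed : IsClosed K
  subset_Icc : K ⊆ Icc a b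
  left_mem : a ∈ K
  right_mem : b ∈ K
  eq_of_gap : ∀ s ∈ K, ∀ t ∈ K, s < t → Disjoint (Ioo s t) K → γ s = γ t

lemma isGapSkeleton_Icc (hab : a ≤ b) : IsGapSkeleton γ a b (Icc a b) where
  isClosed := isClosed_Icc
  subset_Icc := subset_rfl
  left_mem := left_mem_Icc.2 hab
  right_mem := right_mem_Icc.2 hab
  eq_of_gap s hs t ht hst hgap := by
    refine absurd hgap (not_disjoint_iff.2 ⟨(s + t) / 2, ?_, ?_⟩) <;>
      constructor <;> linarith [hs.1, ht.2]

namespace IsGapSkeleton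

lemma exists_eq_across (hK : IsGapSkeleton γ a b K) {s t u v : ℝ} (hs : s ∈ K) (ht : t ∈ K)
    (hsu : s ≤ u) (huv : u ≤ v) (hvt : v ≤ t) (hdisj : Disjoint (Icc u v) K) :
    ∃ x ∈ Icc s u, ∃ y ∈ Icc v t, γ x = γ y := by
  have hSne : (K ∩ Icc s u).Nonempty := ⟨s, hs, le_rfl, hsu⟩
  have hTne : (K ∩ Icc v t).Nonempty := ⟨t, ht, hvt, le_rfl⟩
  have hSbdd : BddAbove (K ∩ Icc s u) := ⟨u, fun _ hz => hz.2.2⟩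
  have hTbdd : BddBelow (K ∩ Icc v t) := ⟨v, fun _ hz => hz.2.1⟩
  obtain ⟨hxK, hx⟩ := (hK.isClosed.inter isClosed_Icc).csSup_mem hSne hSbdd
  obtain ⟨hyK, hy⟩ := (hK.isClosed.inter isClosed_Icc).csInf_mem hTne hTbdd
  refine ⟨_, hx, _, hy, hK.eq_of_gap _ hxK _ hyK ?_ ?_⟩
  · refine (hx.2.trans (huv.trans hy.1)).lt_of_ne fun hxy => ?_
    refine hdisj.notMem_of_mem_right hxK ⟨?_, hx.2.trans huv⟩
    rw [hxy]; exact huv.trans hy.1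
  · refine disjoint_left.2 fun z hz hzK => ?_
    rcases le_or_gt z u with hzu | hzu
    · exact (le_csSup hSbdd ⟨hzK, (hx.1.trans_lt hz.1).le, hzu⟩).not_gt hz.1
    rcases le_or_gt v z with hvz | hvz
    · exact (csInf_le hTbdd ⟨hzK, hvz, (hz.2.trans_le hy.2).le⟩).not_gt hz.2
    · exact hdisj.notMem_of_mem_right hzK ⟨hzu.le, hvz.le⟩

lemma sInter [TopologicalSpace Y] [T2Space Y] {c : Set (Set ℝ)} (hγ : Continuous γ)
    (hc : ∀ K ∈ c, IsGapSkeleton γ a b K) (hchain : IsChain (· ⊆ ·) c) (hne : c.Nonempty) :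
    IsGapSkeleton γ a b (⋂₀ c) := by
  obtain ⟨K₀, hK₀⟩ := hne
  refine ⟨isClosed_sInter fun K hK => (hc K hK).isClosed,
    (sInter_subset_of_mem hK₀).trans (hc K₀ hK₀).subset_Icc,
    fun K hK => (hc K hK).left_mem, fun K hK => (hc K hK).right_mem,
    fun s hs t ht hst hgap => ?_⟩
  have hclosed : IsClosed {p : ℝ × ℝ | γ p.1 = γ p.2} :=
    isClosed_eq (hγ.comp continuous_fst) (hγ.comp continuous_snd)
  suffices (s, t) ∈ closure {p : ℝ × ℝ | γ p.1 = γ p.2} by rwa [hclosed.closure_eq] at this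
  refine Metric.mem_closure_iff.2 fun ε hε => ?_
  set d := min (ε / 2) ((t - s) / 2)
  have hd : 0 < d := lt_min (half_pos hε) (half_pos (sub_pos.2 hst))
  have hdt : s + d ≤ t - d := by linarith [min_le_right (ε / 2) ((t - s) / 2)]
  have hempty : Icc (s + d) (t - d) ∩ ⋂ K : c, (K : Set ℝ) = ∅ := by
    rw [← sInter_eq_iInter, ← disjoint_iff_inter_eq_empty]
    exact hgap.mono_left (Icc_subset_Ioo (by linarith) (by linarith))
  have : Nonempty c := ⟨⟨K₀, hK₀⟩⟩
  obtain ⟨⟨K, hKc⟩, hK⟩ := isCompact_Icc.elim_directed_family_closed _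
    (fun K : c => (hc K K.2).isClosed) hempty
    fun i j => (hchain.total i.2 j.2).elim (fun h => ⟨i, subset_rfl, h⟩)
      (fun h => ⟨j, h, subset_rfl⟩)
  obtain ⟨x, hx, y, hy, hxy⟩ := (hc K hKc).exists_eq_across (hs K hKc) (ht K hKc)
    (by linarith) hdt (by linarith) (disjoint_iff_inter_eq_empty.2 hK)
  refine ⟨(x, y), hxy, ?_⟩
  have hsx := Real.dist_le_of_mem_Icc ⟨le_rfl, by linarith⟩ hx
  have hty := Real.dist_le_of_mem_Icc ⟨by linarith, le_rfl⟩ hy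
  rw [Prod.dist_eq, max_lt_iff]
  constructor <;> linarith [min_le_left (ε / 2) ((t - s) / 2)]

lemma diff_Ioo (hK : IsGapSkeleton γ a b K) {s t : ℝ} (hs : s ∈ K) (ht : t ∈ K)
    (heq : γ s = γ t) : IsGapSkeleton γ a b (K \ Ioo s t) where
  isClosed := hK.isClosed.sdiff isOpen_Ioo
  subset_Icc := sdiff_subset.trans hK.subset_Icc
  left_mem := ⟨hK.left_mem, fun h => (hK.subset_Icc hs).1.not_gt h.1⟩
  right_mem := ⟨hK.right_mem, fun h => (hK.subset_Icc ht).2.not_gt h.2⟩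
  eq_of_gap u hu v hv huv hgap := by
    by_cases hKuv : Disjoint (Ioo u v) K
    · exact hK.eq_of_gap u hu.1 v hv.1 huv hKuv
    obtain ⟨w, hwuv, hwK⟩ := not_disjoint_iff.1 hKuv
    have hwst : w ∈ Ioo s t := by_contra fun hw => hgap.notMem_of_mem_left hwuv ⟨hwK, hw⟩
    have hus : u = s := by
      by_contra hne
      rcases lt_or_gt_of_ne hne with h | h
      · exact hgap.notMem_of_mem_left ⟨h, hwst.1.trans hwuv.2⟩
          ⟨hs, fun h' => lt_irrefl s h'.1⟩
      · exact hu.2 ⟨h, hwuv.1.trans hwst.2⟩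
    have hvt : v = t := by
      by_contra hne
      rcases lt_or_gt_of_ne hne with h | h
      · exact hv.2 ⟨hwuv.2.trans' hwst.1, h⟩
      · exact hgap.notMem_of_mem_left ⟨hwuv.1.trans hwst.2, h⟩
          ⟨ht, fun h' => lt_irrefl t h'.2⟩
    rw [hus, hvt, heq]

end IsGapSkeleton

lemma exists_minimal_isGapSkeleton [TopologicalSpace Y] [T2Space Y] (hγ : Continuous γ)
    (hab : a ≤ b) : ∃ K, Minimal (IsGapSkeleton γ a b) K := by
  obtain ⟨K, -, hK⟩ := zorn_superset_nonempty {K | IsGapSkeleton γ a b K}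
    (fun c hc hchain hne =>
      ⟨⋂₀ c, .sInter hγ hc hchain hne, fun _ => sInter_subset_of_mem⟩)
    _ (isGapSkeleton_Icc hab)
  exact ⟨K, hK⟩

lemma disjoint_Ioo_of_minimal (hK : Minimal (IsGapSkeleton γ a b) K) {s t : ℝ} (hs : s ∈ K)
    (ht : t ∈ K) (heq : γ s = γ t) : Disjoint (Ioo s t) K := by
  rw [← hK.eq_of_subset (hK.prop.diff_Ioo hs ht heq) sdiff_subset]
  exact disjoint_sdiff_right

end Skeleton

section Retraction

variable {Y : Type*} {γ : ℝ → Y} {a b : ℝ} {K : Set ℝ}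

/-- The largest point of `K` below `t`, for `K` closed with least element `a`; the clamp at `a`
avoids `sSup ∅ = 0`. -/
noncomputable def floorIn (K : Set ℝ) (a t : ℝ) : ℝ :=
  sSup (K ∩ Iic (max a t))

namespace IsGapSkeleton

lemma bddAbove_inter_Iic (hK : IsGapSkeleton γ a b K) (t : ℝ) : BddAbove (K ∩ Iic t) :=
  ⟨b, fun _ hx => (hK.subset_Icc hx.1).2⟩

lemma floorIn_mem (hK : IsGapSkeleton γ a b K) (t : ℝ) : floorIn K a t ∈ K :=
  ((hK.isClosed.inter isClosed_Iic).csSup_mem ⟨a, hK.left_mem, le_max_left a t⟩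
    (hK.bddAbove_inter_Iic _)).1

lemma floorIn_le (hK : IsGapSkeleton γ a b K) (t : ℝ) : floorIn K a t ≤ max a t :=
  csSup_le ⟨a, hK.left_mem, le_max_left a t⟩ fun _ hx => hx.2

lemma le_floorIn (hK : IsGapSkeleton γ a b K) {x t : ℝ} (hx : x ∈ K) (hxt : x ≤ max a t) :
    x ≤ floorIn K a t :=
  le_csSup (hK.bddAbove_inter_Iic _) ⟨hx, hxt⟩

lemma floorIn_eq_self (hK : IsGapSkeleton γ a b K) {t : ℝ} (ht : t ∈ K) : floorIn K a t = t :=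
  ((hK.floorIn_le t).trans (max_le (hK.subset_Icc ht).1 le_rfl)).antisymm
    (hK.le_floorIn ht (le_max_right a t))

lemma monotone_floorIn (hK : IsGapSkeleton γ a b K) : Monotone (floorIn K a) := fun _ _ hst =>
  csSup_le_csSup (hK.bddAbove_inter_Iic _) ⟨a, hK.left_mem, le_max_left a _⟩
    (inter_subset_inter_right _ (Iic_subset_Iic.2 (max_le_max le_rfl hst)))

lemma exists_eq_floorIn (hK : IsGapSkeleton γ a b K) {u v : ℝ} (huv : u ≤ v) :
    ∃ w ∈ K, γ w = γ (floorIn K a u) ∧ w ≤ floorIn K a v ∧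
      floorIn K a v - w ≤ v - u := by
  have hlip : max a v - max a u ≤ v - u := by
    rcases le_total a u with h | h
    · rw [max_eq_right h, max_eq_right (h.trans huv)]
    · rw [max_eq_left h, sub_le_iff_le_add]
      exact max_le (by linarith) (by linarith)
  by_cases hS : (K ∩ Icc (max a u) (max a v)).Nonempty
  · have hbdd : BddBelow (K ∩ Icc (max a u) (max a v)) := ⟨max a u, fun _ hx => hx.2.1⟩
    obtain ⟨hwK, hwu, hwv⟩ := (hK.isClosed.inter isClosed_Icc).csInf_mem hS hbdd
    set w := sInf (K ∩ Icc (max a u) (max a v))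
    refine ⟨w, hwK, ?_, hK.le_floorIn hwK hwv, by linarith [hK.floorIn_le v]⟩
    rcases ((hK.floorIn_le u).trans hwu).eq_or_lt with h | h
    · rw [h]
    refine (hK.eq_of_gap _ (hK.floorIn_mem u) _ hwK h (disjoint_left.2 fun z hz hzK => ?_)).symm
    rcases le_or_gt z (max a u) with hzu | hzu
    · exact (hK.le_floorIn hzK hzu).not_gt hz.1
    · exact (csInf_le hbdd ⟨hzK, hzu.le, (hz.2.trans_le hwv).le⟩).not_gt hz.2
  · have hvu : floorIn K a v ≤ floorIn K a u := by
      refine hK.le_floorIn (hK.floorIn_mem v) (not_lt.1 fun h => hS ?_)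
      exact ⟨_, hK.floorIn_mem v, h.le, hK.floorIn_le v⟩
    have heq := hvu.antisymm (hK.monotone_floorIn huv)
    exact ⟨floorIn K a v, hK.floorIn_mem v, by rw [heq], le_rfl, by linarith⟩

lemma uniformContinuous_comp_floorIn [PseudoMetricSpace Y] (hK : IsGapSkeleton γ a b K)
    (hγ : Continuous γ) : UniformContinuous (γ ∘ floorIn K a) := by
  rw [Metric.uniformContinuous_iff]
  intro ε hε
  obtain ⟨δ, hδ, hγδ⟩ := Metric.uniformContinuousOn_iff.1
    (isCompact_Icc.uniformContinuousOn_of_continuous hγ.continuousOn) ε hε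
  have key : ∀ {u v}, u ≤ v → v - u < δ →
      dist (γ (floorIn K a u)) (γ (floorIn K a v)) < ε := by
    intro u v huv hd
    obtain ⟨w, hwK, hw, hwv, hvw⟩ := hK.exists_eq_floorIn huv
    rw [← hw]
    refine hγδ _ (hK.subset_Icc hwK) _ (hK.subset_Icc (hK.floorIn_mem v)) ?_
    rw [dist_comm, Real.dist_eq, abs_of_nonneg (sub_nonneg.2 hwv)]
    linarith
  refine ⟨δ, hδ, fun u v huv => ?_⟩
  rw [Real.dist_eq] at huv
  rcases le_total u v with h | h
  · exact key h (by rwa [abs_sub_comm, abs_of_nonneg (sub_nonneg.2 h)] at huv)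
  · rw [dist_comm]
    exact key h (by rwa [abs_of_nonneg (sub_nonneg.2 h)] at huv)

end IsGapSkeleton

lemma ordConnected_preimage_comp_floorIn (hK : Minimal (IsGapSkeleton γ a b) K) (y : Y) :
    ((γ ∘ floorIn K a) ⁻¹' {y}).OrdConnected := by
  refine ⟨fun s hs t ht u hu => ?_⟩
  have hsu := hK.prop.monotone_floorIn hu.1
  have hut := hK.prop.monotone_floorIn hu.2
  rcases hsu.eq_or_lt with hsu | hsu
  · rwa [mem_preimage, comp_apply, ← hsu]
  rcases hut.eq_or_lt with hut | hut
  · rwa [mem_preimage, comp_apply, hut]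
  refine absurd (disjoint_Ioo_of_minimal hK (hK.prop.floorIn_mem s) (hK.prop.floorIn_mem t)
    ((hs : γ _ = y).trans (ht : γ _ = y).symm)) (not_disjoint_iff.2 ?_)
  exact ⟨_, ⟨hsu, hut⟩, hK.prop.floorIn_mem u⟩

theorem containsArc_image_Icc [MetricSpace Y] (hγ : Continuous γ) (hab : a ≤ b)
    (hne : γ a ≠ γ b) : ContainsArc (γ '' Icc a b) := by
  obtain ⟨K, hK⟩ := exists_minimal_isGapSkeleton hγ hab
  have hends : ∀ t ∈ K, (γ ∘ floorIn K a) t = γ t := fun t ht => by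
    rw [comp_apply, hK.prop.floorIn_eq_self ht]
  refine (containsArc_image_Icc_of_ordConnected
    (hK.prop.uniformContinuous_comp_floorIn hγ).continuous
    (ordConnected_preimage_comp_floorIn hK) hab ?_).mono ?_
  · rwa [hends a hK.prop.left_mem, hends b hK.prop.right_mem]
  · rintro _ ⟨t, -, rfl⟩
    exact mem_image_of_mem γ (hK.prop.subset_Icc (hK.prop.floorIn_mem t))

end Retraction

theorem containsArc_range_of_ne {Y : Type*} [MetricSpace Y] {γ : unitInterval → Y}
    (hγ : Continuous γ) {s t : unitInterval} (hst : γ s ≠ γ t) : ContainsArc (range γ) := by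
  wlog h : s ≤ t generalizing s t
  · exact this hst.symm (le_of_not_ge h)
  rw [← IccExtend_range zero_le_one γ]
  refine (containsArc_image_Icc (continuous_IccExtend_iff.2 hγ) h ?_).mono
    (image_subset_range _ _)
  rwa [IccExtend_val, IccExtend_val]

theorem IsCompact.exists_dist_eq_diam {Y : Type*} [PseudoMetricSpace Y] {L : Set Y}
    (hL : IsCompact L) (hne : L.Nonempty) : ∃ x ∈ L, ∃ y ∈ L, dist x y = diam L := by
  obtain ⟨p, ⟨hp₁, hp₂⟩, hmax⟩ := (hL.prod hL).exists_isMaxOn (hne.prod hne)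
    continuous_dist.continuousOn
  refine ⟨p.1, hp₁, p.2, hp₂, le_antisymm (dist_le_diam_of_mem hL.isBounded hp₁ hp₂) ?_⟩
  exact diam_le_of_forall_dist_le dist_nonneg fun x hx y hy => hmax (mk_mem_prod hx hy)

theorem not_subsingleton_image_of_dist_lt {Y : Type*} [PseudoMetricSpace Y] {f : Y → Y}
    {L : Set Y} {ε : ℝ} (hL : IsCompact L) (hne : L.Nonempty)
    (hf : ∀ y ∈ L, dist (f y) y < ε) (hε : 2 * ε ≤ diam L) : ¬ (f '' L).Subsingleton := by
  intro hsub
  obtain ⟨y, hy, z, hz, hyz⟩ := hL.exists_dist_eq_diam hne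
  have hfyz : f y = f z := hsub (mem_image_of_mem f hy) (mem_image_of_mem f hz)
  have hy' : dist (f z) y < ε := hfyz ▸ hf y hy
  linarith [dist_triangle_left y z (f z), hf z hz]

theorem prod_univ_subset_connectedComponentIn {X Y : Type*} [TopologicalSpace X]
    {q : X × unitInterval → Y} {x : X × unitInterval} (hconst : ∀ t, q (x.1, t) = q x) :
    {x.1} ×ˢ univ ⊆ connectedComponentIn (q ⁻¹' {q x}) x :=
  (isPreconnected_singleton.prod isPreconnected_univ).subset_connectedComponentIn
    ⟨rfl, mem_univ x.2⟩ (by rintro ⟨_, t⟩ ⟨rfl, -⟩; exact hconst t)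

theorem stmt_9_general {Y : Type*} [MetricSpace Y]
    (U : Set Y) (hnoarc : ¬ ContainsArc U)
    (L : Set Y) (hLcomp : IsCompact L) (hLconn : IsConnected L)
    (δ ε : ℝ) (hδ : δ = Metric.diam L)
    (hε : ε = min (δ / 2) (sInf {r : ℝ | ∃ a ∈ L, ∃ b ∈ Uᶜ, r = dist a b}))
    (q : Y × unitInterval → Y) (hq : Continuous q)
    (hclose : ∀ p : Y × unitInterval, dist (q p) p.1 < ε) :
    ¬ IsKrasMap q := by
  intro hKras
  have hεδ : ε ≤ δ / 2 := hε ▸ min_le_left _ _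
  have hεU : ∀ y ∈ L, ∀ z ∉ U, ε ≤ dist y z := fun y hy z hz =>
    hε ▸ (min_le_right _ _).trans <|
      csInf_le ⟨0, by rintro _ ⟨_, -, _, -, rfl⟩; exact dist_nonneg⟩ ⟨y, hy, z, hz, rfl⟩
  have hmapsTo : ∀ y ∈ L, ∀ t, q (y, t) ∈ U := fun y hy t => by_contra fun hout =>
    (hεU y hy _ hout).not_gt (dist_comm y (q (y, t)) ▸ hclose (y, t))
  have hvert : ∀ y ∈ L, ∀ t, q (y, t) = q (y, 0) := fun y hy t => by_contra fun hne =>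
    hnoarc <| (containsArc_range_of_ne (hq.comp (Continuous.prodMk_right y)) hne).mono
      (range_subset_iff.2 (hmapsTo y hy))
  rcases hKras (L ×ˢ {0}) (hLcomp.prod isCompact_singleton) (hLconn.prod isConnected_singleton)
    with hsub | ⟨x, ⟨hx₁, hx₂⟩, hcomp⟩
  · rw [prod_singleton, image_image] at hsub
    exact not_subsingleton_image_of_dist_lt hLcomp hLconn.nonempty (fun y _ => hclose (y, 0))
      (by linarith) hsub
  · have hseg := prod_univ_subset_connectedComponentIn (q := q) (x := x) fun t => by
      rw [hvert _ hx₁, ← hx₂]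
    exact one_ne_zero (hcomp (hseg (show (x.1, 1) ∈ {x.1} ×ˢ univ from ⟨rfl, trivial⟩))).2

theorem stmt_9 {Y : Type*} [MetricSpace Y] [CompactSpace Y] [ConnectedSpace Y] [Nontrivial Y]
    (U : Set Y) (hUopen : IsOpen U) (hnoarc : ¬ ContainsArc U)
    (L : Set Y) (hLU : L ⊆ U) (hLcomp : IsCompact L) (hLconn : IsConnected L)
    (hLnd : L.Nontrivial)
    (δ ε : ℝ) (hδ : δ = Metric.diam L)
    (hε : ε = min (δ / 2) (sInf {r : ℝ | ∃ a ∈ L, ∃ b ∈ Uᶜ, r = dist a b}))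
    (q : Y × unitInterval → Y) (hq : Continuous q)
    (hclose : ∀ p : Y × unitInterval, dist (q p) p.1 < ε) :
    ¬ IsKrasMap q :=
  stmt_9_general U hnoarc L hLcomp hLconn δ ε hδ hε q hq hclose
end

section
/- Let X be a compact metric space and {L_k} a decreasing sequence of subcontinua of X, L = L₁, such that a continuous map g : X → M satisfies: for every k and every x ∈ L_{k+1}, the component C(x,g) of x in g⁻¹(g(x)) is contained in B(L_k, 1/(k+1)). Then for every x ∈ ⋂_k L_k, the component C(x,g) is contained in L. -/
theorem stmt_12 {X M : Type*} [MetricSpace X] [CompactSpace X] [MetricSpace M]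
    (g : X → M) (hg : Continuous g)
    (L : ℕ → Set X) (hdec : ∀ k, L (k + 1) ⊆ L k)
    (hcont : ∀ k, IsCompact (L k) ∧ IsConnected (L k))
    (hcomp : ∀ k, ∀ x ∈ L (k + 1),
      connectedComponentIn (g ⁻¹' {g x}) x ⊆ Metric.thickening (1 / ((k : ℝ) + 2)) (L k)) :
    ∀ x ∈ ⋂ k, L k, connectedComponentIn (g ⁻¹' {g x}) x ⊆ L 0 := by
  intro x hx y hy
  have hL0 : ∀ k, L k ⊆ L 0 := by
    intro k
    induction k with
    | zero => exact subset_rfl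
    | succ n ih => exact (hdec n).trans ih
  have hxk : ∀ k, x ∈ L k := by
    intro k
    exact Set.mem_iInter.mp hx k
  have hclos : y ∈ closure (L 0) := by
    rw [Metric.mem_closure_iff]
    intro ε hε
    obtain ⟨k, hk⟩ := exists_nat_gt (1 / ε)
    have hpos : (0 : ℝ) < (k : ℝ) + 2 := by positivity
    have h1 : 1 / ((k : ℝ) + 2) < ε := by
      rw [div_lt_iff₀ hpos, ← div_lt_iff₀' hε]
      calc 1 / ε < k := hk
        _ ≤ (k : ℝ) + 2 := by linarith
    have hy' := hcomp k x (hxk (k + 1)) hy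
    have := (Metric.mem_thickening_iff.mp (Metric.thickening_subset_of_subset _ (hL0 k) hy'))
    obtain ⟨z, hz, hdz⟩ := this
    exact ⟨z, hz, lt_trans hdz h1⟩
  rwa [IsClosed.closure_eq ((hcont 0).1.isClosed)] at hclos
end

section
/- Let X be compact metric, M a metric space, g : X → M continuous, L ⊆ X a subcontinuum with diam g(L) > 0, and suppose every point x in a nonempty subset E ⊆ L satisfying C(x,g) ⊆ B(L,1/2) has a neighborhood U_x in L with C(z,g) ⊆ B(L,1/2) for all z ∈ U_x. Fix x₀ ∈ E and let D be the family of subcontinua D of L containing x₀ such that C(d,g) ⊆ B(L,1/2) for each d ∈ D. If g(D) is a singleton for every D ∈ D, then the closure of the union of D is a member of D, is maximal in D, and equals L — contradicting diam g(L) > 0. Hence there exists D* ∈ D with diam g(D*) > 0. -/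
/-!
The components of `x₀` in the closed neighbourhoods `g⁻¹ (closedBall (g x₀) ε)` of its fiber
decrease, as `ε → 0`, to a connected subset of the fiber, hence of `C(x₀, g)`; by compactness
they lie in the open set `B(L, 1/2)` once `ε` is small. Take `D` to be the component of `x₀` in
`L ∩ g⁻¹ (closedBall (g x₀) ε)`: every fiber component through a point of `D` lies in the former
component, so in `B(L, 1/2)`. If `g` were constant on `D`, then `D` would stay inside the open
set `g⁻¹ (ball (g x₀) ε)`, and boundary bumping in the continuum `L` would force
`L ⊆ g⁻¹ (closedBall (g x₀) ε)`, which is impossible for `ε < diam g(L) / 2`.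
-/

open Set Metric

section Topology

variable {X : Type*} [TopologicalSpace X]

theorem IsClosed.connectedComponentIn {F : Set X} (hF : IsClosed F) (x : X) :
    IsClosed (connectedComponentIn F x) := by
  by_cases hx : x ∈ F
  · rw [connectedComponentIn_eq_image hx]
    exact hF.isClosedEmbedding_subtypeVal.isClosedMap _ isClosed_connectedComponent
  · rw [connectedComponentIn_eq_empty hx]
    exact isClosed_empty

theorem Directed.isPreconnected_iInter [T2Space X] {ι : Type*} [Nonempty ι] {V : ι → Set X}
    (hV : Directed (· ⊇ ·) V) (hcomp : ∀ i, IsCompact (V i))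
    (hconn : ∀ i, IsPreconnected (V i)) : IsPreconnected (⋂ i, V i) := by
  set T := ⋂ i, V i
  have hTclosed : IsClosed T := isClosed_iInter fun i => (hcomp i).isClosed
  have hTcomp : IsCompact T :=
    (hcomp (Classical.arbitrary ι)).of_isClosed_subset hTclosed (iInter_subset _ _)
  rw [isPreconnected_iff_subset_of_fully_disjoint_closed hTclosed]
  intro a b ha hb hTab hab
  obtain ⟨u, v, hu, hv, hau, hbv, huv⟩ := SeparatedNhds.of_isCompact_isCompact
    (hTcomp.inter_left ha) (hTcomp.inter_left hb) (hab.mono inter_subset_left inter_subset_left)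
  have hTuv : ∀ y ∈ T, y ∈ u ∪ v := fun y hy =>
    (hTab hy).imp (fun hya => hau ⟨hya, hy⟩) (fun hyb => hbv ⟨hyb, hy⟩)
  obtain ⟨i, hi⟩ := exists_subset_nhds_of_isCompact hV hcomp
    fun y hy => (hu.union hv).mem_nhds (hTuv y hy)
  have hTi : T ⊆ V i := iInter_subset _ i
  rcases (hconn i).subset_or_subset hu hv huv hi with hiu | hiv
  · exact Or.inl fun y hy => (hTab hy).resolve_right fun hyb =>
      disjoint_left.1 huv (hiu (hTi hy)) (hbv ⟨hyb, hy⟩)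
  · exact Or.inr fun y hy => (hTab hy).resolve_left fun hya =>
      disjoint_left.1 huv (hau ⟨hya, hy⟩) (hiv (hTi hy))

theorem exists_isClopen_of_connectedComponent_subset [CompactSpace X] [T2Space X] {x : X}
    {U : Set X} (hU : IsOpen U) (h : connectedComponent x ⊆ U) :
    ∃ S, IsClopen S ∧ x ∈ S ∧ S ⊆ U := by
  let N := {s : Set X // IsClopen s ∧ x ∈ s}
  have : Nonempty N := ⟨⟨univ, isClopen_univ, mem_univ x⟩⟩
  have hdir : Directed (· ⊇ ·) fun s : N => s.val := fun s t =>
    ⟨⟨s.1 ∩ t.1, s.2.1.inter t.2.1, s.2.2, t.2.2⟩, inter_subset_left, inter_subset_right⟩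
  rw [connectedComponent_eq_iInter_isClopen] at h
  obtain ⟨⟨S, hS, hxS⟩, hSU⟩ := exists_subset_nhds_of_compactSpace hdir
    (fun s : N => s.2.1.1) fun y hy => hU.mem_nhds (h hy)
  exact ⟨S, hS, hxS, hSU⟩

/-- The boundary bumping theorem, in contrapositive form. -/
theorem eq_univ_of_connectedComponentIn_subset [CompactSpace X] [T2Space X] [PreconnectedSpace X]
    {A U : Set X} (hA : IsClosed A) (hU : IsOpen U) (hUA : U ⊆ A) {x : X} (hx : x ∈ A)
    (h : connectedComponentIn A x ⊆ U) : A = univ := by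
  have : CompactSpace A := isCompact_iff_compactSpace.mp hA.isCompact
  rw [connectedComponentIn_eq_image hx, image_subset_iff] at h
  obtain ⟨S, hS, hxS, hSU⟩ :=
    exists_isClopen_of_connectedComponent_subset (hU.preimage continuous_subtype_val) h
  obtain ⟨O, hO, rfl⟩ := isOpen_induced_iff.mp hS.2
  have hAO : A ∩ O = U ∩ O := by
    refine Subset.antisymm (fun y hy => ⟨?_, hy.2⟩) (inter_subset_inter_left O hUA)
    exact @hSU ⟨y, hy.1⟩ hy.2
  have hclopen : IsClopen (A ∩ O) := by
    refine ⟨?_, hAO ▸ hU.inter hO⟩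
    rw [← Subtype.image_preimage_coe]
    exact (hS.1.isCompact.image continuous_subtype_val).isClosed
  exact eq_univ_of_univ_subset <|
    hclopen.eq_univ ⟨x, hx, hxS⟩ ▸ inter_subset_left

theorem IsCompact.subset_of_connectedComponentIn_subset [T2Space X] {L F U : Set X}
    (hLcomp : IsCompact L) (hLconn : IsPreconnected L) (hF : IsClosed F) (hU : IsOpen U)
    (hUF : U ⊆ F) {x : X} (hx : x ∈ L ∩ F) (h : connectedComponentIn (L ∩ F) x ⊆ U) :
    L ⊆ F := by
  have : CompactSpace L := isCompact_iff_compactSpace.mp hLcomp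
  have : PreconnectedSpace L := Subtype.preconnectedSpace hLconn
  have hsub :
      connectedComponentIn (Subtype.val ⁻¹' F : Set L) ⟨x, hx.1⟩ ⊆ Subtype.val ⁻¹' U := by
    rw [← image_subset_iff]
    refine (continuous_subtype_val.continuousOn.image_connectedComponentIn_subset hx.2).trans ?_
    rwa [Subtype.image_preimage_coe]
  have hFL := eq_univ_of_connectedComponentIn_subset (hF.preimage continuous_subtype_val)
    (hU.preimage continuous_subtype_val) (preimage_mono hUF) hx.2 hsub
  rwa [preimage_eq_univ_iff, Subtype.range_coe] at hFL

end Topology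

section Fibers

variable {X M : Type*} [TopologicalSpace X]

theorem connectedComponentIn_preimage_singleton_subset {g : X → M} {s : Set M} {x d : X}
    (hd : d ∈ connectedComponentIn (g ⁻¹' s) x) :
    connectedComponentIn (g ⁻¹' {g d}) d ⊆ connectedComponentIn (g ⁻¹' s) x := by
  rw [connectedComponentIn_eq hd]
  refine connectedComponentIn_mono d fun y (hy : g y = g d) => ?_
  rw [mem_preimage, hy]
  exact connectedComponentIn_subset (g ⁻¹' s) x hd

theorem exists_connectedComponentIn_preimage_closedBall_subset [CompactSpace X] [T2Space X]
    [MetricSpace M] {g : X → M} (hg : Continuous g) (x : X) {W : Set X} (hW : IsOpen W)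
    (h : connectedComponentIn (g ⁻¹' {g x}) x ⊆ W) :
    ∃ ε > 0, connectedComponentIn (g ⁻¹' closedBall (g x) ε) x ⊆ W := by
  set Q : ℕ → Set X := fun n => connectedComponentIn (g ⁻¹' closedBall (g x) (1 / (n + 1))) x
  have hQanti : Antitone Q := fun m n hmn =>
    connectedComponentIn_mono x <| preimage_mono <| closedBall_subset_closedBall <|
      Nat.one_div_le_one_div hmn
  have hQcomp : ∀ n, IsCompact (Q n) := fun n =>
    ((isClosed_closedBall.preimage hg).connectedComponentIn x).isCompact
  have hxQ : x ∈ ⋂ n, Q n :=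
    mem_iInter.2 fun n => mem_connectedComponentIn (mem_closedBall_self (by positivity))
  have hQfiber : ⋂ n, Q n ⊆ g ⁻¹' {g x} := by
    refine fun y hy => eq_of_forall_dist_le fun ε hε => ?_
    obtain ⟨n, hn⟩ := exists_nat_one_div_lt hε
    have hyn : y ∈ g ⁻¹' closedBall (g x) (1 / (n + 1)) :=
      connectedComponentIn_subset _ x (mem_iInter.1 hy n)
    exact (mem_closedBall.1 hyn).trans hn.le
  have hQC : ⋂ n, Q n ⊆ connectedComponentIn (g ⁻¹' {g x}) x :=
    (hQanti.directed_ge.isPreconnected_iInter hQcomp fun _ =>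
      isPreconnected_connectedComponentIn).subset_connectedComponentIn hxQ hQfiber
  obtain ⟨n, hn⟩ := exists_subset_nhds_of_isCompact hQanti.directed_ge hQcomp
    fun y hy => hW.mem_nhds (h (hQC hy))
  exact ⟨1 / (n + 1), by positivity, hn⟩

end Fibers

theorem stmt_13_general {X M : Type*} [MetricSpace X] [CompactSpace X] [MetricSpace M]
    (g : X → M) (hg : Continuous g)
    (L : Set X) (hLcomp : IsCompact L) (hLconn : IsConnected L)
    (hLdiam : 0 < Metric.diam (g '' L))
    (E : Set X) (hEL : E ⊆ L)
    (hE : ∀ x ∈ E, connectedComponentIn (g ⁻¹' {g x}) x ⊆ Metric.thickening (1 / 2) L)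
    (x₀ : X) (hx₀ : x₀ ∈ E) :
    ∃ D : Set X, D ⊆ L ∧ IsCompact D ∧ IsConnected D ∧ x₀ ∈ D ∧
      (∀ d ∈ D, connectedComponentIn (g ⁻¹' {g d}) d ⊆ Metric.thickening (1 / 2) L) ∧
      0 < Metric.diam (g '' D) := by
  obtain ⟨δ, hδ, hδW⟩ := exists_connectedComponentIn_preimage_closedBall_subset hg x₀
    isOpen_thickening (hE x₀ hx₀)
  set ε := min δ (diam (g '' L) / 4)
  have hε : 0 < ε := lt_min hδ (by positivity)
  have hx₀G : x₀ ∈ L ∩ g ⁻¹' closedBall (g x₀) ε := ⟨hEL hx₀, mem_closedBall_self hε.le⟩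
  set D := connectedComponentIn (L ∩ g ⁻¹' closedBall (g x₀) ε) x₀
  have hDcomp : IsCompact D :=
    ((hLcomp.isClosed.inter (isClosed_closedBall.preimage hg)).connectedComponentIn x₀).isCompact
  refine ⟨D, (connectedComponentIn_subset _ _).trans inter_subset_left, hDcomp,
    isConnected_connectedComponentIn_iff.2 hx₀G, mem_connectedComponentIn hx₀G,
    fun d hd => ?_, ?_⟩
  · refine (connectedComponentIn_preimage_singleton_subset
      (connectedComponentIn_mono x₀ inter_subset_right hd)).trans (.trans ?_ hδW)
    exact connectedComponentIn_mono x₀ <| preimage_mono <|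
      closedBall_subset_closedBall (min_le_left _ _)
  · by_contra! hD
    have hDball : D ⊆ g ⁻¹' ball (g x₀) ε := fun d hd =>
      calc dist (g d) (g x₀) ≤ diam (g '' D) := dist_le_diam_of_mem (hDcomp.image hg).isBounded
              (mem_image_of_mem g hd) (mem_image_of_mem g (mem_connectedComponentIn hx₀G))
        _ < ε := hD.trans_lt hε
    have hLG := hLcomp.subset_of_connectedComponentIn_subset hLconn.isPreconnected
      (isClosed_closedBall.preimage hg) (isOpen_ball.preimage hg)
      (preimage_mono ball_subset_closedBall) hx₀G hDball
    have : diam (g '' L) ≤ 2 * ε :=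
      (diam_mono (image_subset_iff.2 hLG) isBounded_closedBall).trans (diam_closedBall hε.le)
    linarith [min_le_right δ (diam (g '' L) / 4)]

theorem stmt_13 {X M : Type*} [MetricSpace X] [CompactSpace X] [MetricSpace M]
    (g : X → M) (hg : Continuous g)
    (L : Set X) (hLcomp : IsCompact L) (hLconn : IsConnected L)
    (hLdiam : 0 < Metric.diam (g '' L))
    (E : Set X) (hEL : E ⊆ L) (hEne : E.Nonempty)
    (hE : ∀ x ∈ E, connectedComponentIn (g ⁻¹' {g x}) x ⊆ Metric.thickening (1 / 2) L)
    (hnbhd : ∀ x ∈ E, ∃ U ∈ nhdsWithin x L, ∀ z ∈ U,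
      connectedComponentIn (g ⁻¹' {g z}) z ⊆ Metric.thickening (1 / 2) L)
    (x₀ : X) (hx₀ : x₀ ∈ E) :
    ∃ D : Set X, D ⊆ L ∧ IsCompact D ∧ IsConnected D ∧ x₀ ∈ D ∧
      (∀ d ∈ D, connectedComponentIn (g ⁻¹' {g d}) d ⊆ Metric.thickening (1 / 2) L) ∧
      0 < Metric.diam (g '' D) :=
  stmt_13_general g hg L hLcomp hLconn hLdiam E hEL hE x₀ hx₀
end

section
/- Let X be a compact metric space, M a metric space, and {g_i} a sequence in C(X,M) converging uniformly to f. Suppose for each i there is a subcontinuum L_i ⊆ X with diam g_i(L_i) ≥ 1/n and such that for no x ∈ L_i is the component C(x, g_i) contained in B(L_i, 1/m). If L_i converges to a subcontinuum L in the Hausdorff metric, then diam f(L) ≥ 1/n, and for every x ∈ L, if x_i ∈ L_i converge to x and C(x_i, g_i) converges in the Hausdorff metric to a continuum C, then x ∈ C ⊆ C(x, f) and C is not contained in B(L, 1/m). -/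
open Filter Metric Set

private lemma aux_edist_fin {X : Type*} [MetricSpace X] [CompactSpace X] {s t : Set X}
    (hs : s.Nonempty) (ht : t.Nonempty) : EMetric.hausdorffEdist s t ≠ ⊤ :=
  Metric.hausdorffEdist_ne_top_of_nonempty_of_bounded hs ht
    Metric.isBounded_of_compactSpace Metric.isBounded_of_compactSpace

/-- If `y i ∈ s i`, `hausdorffDist (s i) t → 0` and `y i → z`, then `z ∈ t`. -/
private lemma aux_mem_limit {X : Type*} [MetricSpace X] [CompactSpace X]
    (s : ℕ → Set X) (t : Set X) (hsne : ∀ i, (s i).Nonempty)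
    (htc : IsClosed t) (htne : t.Nonempty)
    (hd : Tendsto (fun i => hausdorffDist (s i) t) atTop (nhds 0))
    (y : ℕ → X) (hy : ∀ i, y i ∈ s i) (z : X)
    (hyz : Tendsto y atTop (nhds z)) : z ∈ t := by
  have h1 : Tendsto (fun i => infDist (y i) t) atTop (nhds (infDist z t)) :=
    ((Metric.continuous_infDist_pt t).tendsto z).comp hyz
  have h2 : Tendsto (fun i => infDist (y i) t) atTop (nhds 0) :=
    squeeze_zero (fun i => infDist_nonneg)
      (fun i => infDist_le_hausdorffDist_of_mem (hy i) (aux_edist_fin (hsne i) htne)) hd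
  have h3 : infDist z t = 0 := tendsto_nhds_unique h1 h2
  rw [← htc.closure_eq]
  exact (Metric.mem_closure_iff_infDist_zero htne).mpr h3

/-- Points of the limit set can be approximated by points of the converging sets. -/
private lemma aux_approx {X : Type*} [MetricSpace X] [CompactSpace X]
    (s : ℕ → Set X) (t : Set X) (hsne : ∀ i, (s i).Nonempty) (htne : t.Nonempty)
    (hd : Tendsto (fun i => hausdorffDist (s i) t) atTop (nhds 0)) {z : X} (hz : z ∈ t) :
    ∃ y : ℕ → X, (∀ i, y i ∈ s i) ∧ Tendsto y atTop (nhds z) := by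
  have key : ∀ i : ℕ, ∃ w ∈ s i, dist z w < hausdorffDist (s i) t + 1 / (i + 1) := by
    intro i
    apply (Metric.infDist_lt_iff (hsne i)).mp
    have h1 : infDist z (s i) ≤ hausdorffDist (s i) t := by
      rw [hausdorffDist_comm]
      exact infDist_le_hausdorffDist_of_mem hz (aux_edist_fin htne (hsne i))
    have h2 : (0:ℝ) < 1 / (i + 1) := by positivity
    linarith
  choose y hy hdist using key
  refine ⟨y, hy, ?_⟩
  rw [tendsto_iff_dist_tendsto_zero]
  have hb : Tendsto (fun i : ℕ => hausdorffDist (s i) t + 1 / ((i:ℝ) + 1)) atTop (nhds 0) := by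
    have := hd.add tendsto_one_div_add_atTop_nhds_zero_nat
    simpa using this
  exact squeeze_zero (fun i => dist_nonneg)
    (fun i => by rw [dist_comm]; exact (hdist i).le) hb

theorem stmt_16 {X M : Type*} [MetricSpace X] [CompactSpace X] [MetricSpace M]
    (m n : ℕ) (hm : 0 < m) (hn : 0 < n)
    (g : ℕ → X → M) (f : X → M) (hg : ∀ i, Continuous (g i)) (hf : Continuous f)
    (hconv : TendstoUniformly g f Filter.atTop)
    (L : ℕ → Set X) (hLcomp : ∀ i, IsCompact (L i)) (hLconn : ∀ i, IsConnected (L i))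
    (hdiam : ∀ i, Metric.diam (g i '' L i) ≥ 1 / (n : ℝ))
    (hnocomp : ∀ i, ∀ x ∈ L i,
      ¬ connectedComponentIn (g i ⁻¹' {g i x}) x ⊆ Metric.thickening (1 / (m : ℝ)) (L i))
    (Llim : Set X) (hLlimcomp : IsCompact Llim) (hLlimconn : IsConnected Llim)
    (hLconv : Filter.Tendsto (fun i => Metric.hausdorffDist (L i) Llim)
      Filter.atTop (nhds 0)) :
    Metric.diam (f '' Llim) ≥ 1 / (n : ℝ) ∧
      ∀ x ∈ Llim, ∀ xi : ℕ → X, (∀ i, xi i ∈ L i) →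
        Filter.Tendsto xi Filter.atTop (nhds x) →
        ∀ C : Set X, IsCompact C → IsConnected C →
          Filter.Tendsto
            (fun i => Metric.hausdorffDist
              (connectedComponentIn (g i ⁻¹' {g i (xi i)}) (xi i)) C)
            Filter.atTop (nhds 0) →
          x ∈ C ∧ C ⊆ connectedComponentIn (f ⁻¹' {f x}) x ∧
            ¬ C ⊆ Metric.thickening (1 / (m : ℝ)) Llim := by
  have hLne : ∀ i, (L i).Nonempty := fun i => (hLconn i).nonempty
  have hLlimne : Llim.Nonempty := hLlimconn.nonempty
  constructor
  · -- diameter part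
    have key : ∀ ε : ℝ, 0 < ε → 1 / (n:ℝ) ≤ diam (f '' Llim) + ε := by
      intro ε hε
      -- uniform continuity of f
      have hfu : UniformContinuous f := CompactSpace.uniformContinuous_of_continuous hf
      obtain ⟨δ, hδ, hδf⟩ := Metric.uniformContinuous_iff.mp hfu (ε/6) (by linarith)
      have h1 : ∀ᶠ i in atTop, ∀ x, dist (f x) (g i x) < ε/6 :=
        Metric.tendstoUniformly_iff.mp hconv (ε/6) (by linarith)
      have h2 : ∀ᶠ i in atTop, hausdorffDist (L i) Llim < δ :=
        (hLconv.eventually (gt_mem_nhds hδ))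
      obtain ⟨i, hi1, hi2⟩ := (h1.and h2).exists
      have hclose : ∀ a ∈ L i, ∃ a' ∈ Llim, dist a a' < δ := by
        intro a ha
        apply (Metric.infDist_lt_iff hLlimne).mp
        exact lt_of_le_of_lt
          (infDist_le_hausdorffDist_of_mem ha (aux_edist_fin (hLne i) hLlimne)) hi2
      have hdle : diam (g i '' L i) ≤ diam (f '' Llim) + ε := by
        apply Metric.diam_le_of_forall_dist_le (by positivity)
        rintro p ⟨a, ha, rfl⟩ q ⟨b, hb, rfl⟩
        obtain ⟨a', ha', haa'⟩ := hclose a ha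
        obtain ⟨b', hb', hbb'⟩ := hclose b hb
        have e1 : dist (g i a) (f a) < ε/6 := by rw [dist_comm]; exact hi1 a
        have e2 : dist (f a) (f a') < ε/6 := hδf haa'
        have e3 : dist (f a') (f b') ≤ diam (f '' Llim) :=
          dist_le_diam_of_mem ((hLlimcomp.image hf).isBounded)
            (mem_image_of_mem f ha') (mem_image_of_mem f hb')
        have e4 : dist (f b') (f b) < ε/6 := by rw [dist_comm]; exact hδf hbb'
        have e5 : dist (f b) (g i b) < ε/6 := hi1 b
        have T1 : dist (g i a) (f a') ≤ dist (g i a) (f a) + dist (f a) (f a') :=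
          dist_triangle _ _ _
        have T2 : dist (f b') (g i b) ≤ dist (f b') (f b) + dist (f b) (g i b) :=
          dist_triangle _ _ _
        have T : dist (g i a) (g i b) ≤ dist (g i a) (f a') + dist (f a') (f b')
            + dist (f b') (g i b) := dist_triangle4 _ _ _ _
        linarith
      exact le_trans (hdiam i) hdle
    by_contra h
    push_neg at h
    have := key ((1/(n:ℝ) - diam (f '' Llim))/2) (by linarith)
    linarith
  · intro x hx xi hxi hxitend C hCcomp hCconn hCtend
    set Ci : ℕ → Set X := fun i => connectedComponentIn (g i ⁻¹' {g i (xi i)}) (xi i) with hCi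
    have hCine : ∀ i, (Ci i).Nonempty := by
      intro i
      exact ⟨xi i, mem_connectedComponentIn (by simp)⟩
    have hximem : ∀ i, xi i ∈ Ci i := fun i => mem_connectedComponentIn (by simp)
    have hCne : C.Nonempty := hCconn.nonempty
    have hxC : x ∈ C :=
      aux_mem_limit Ci C hCine hCcomp.isClosed hCne hCtend xi hximem x hxitend
    refine ⟨hxC, ?_, ?_⟩
    · -- C ⊆ connectedComponentIn (f ⁻¹' {f x}) x
      have hfconst : ∀ y ∈ C, f y = f x := by
        intro y hy
        obtain ⟨yi, hyi, hyitend⟩ := aux_approx Ci C hCine hCne hCtend hy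
        have hge : ∀ ε : ℝ, 0 < ε → dist (f y) (f x) ≤ ε := by
          intro ε hε
          have t1 : ∀ᶠ i in atTop, dist (f y) (f (yi i)) < ε/4 := by
            have : Tendsto (fun i => f (yi i)) atTop (nhds (f y)) :=
              (hf.tendsto y).comp hyitend
            exact (tendsto_iff_dist_tendsto_zero.mp this).eventually
              (gt_mem_nhds (show (0:ℝ) < ε/4 by linarith)) |>.mono fun i h => by
                rwa [dist_comm] at h
          have t2 : ∀ᶠ i in atTop, ∀ z, dist (f z) (g i z) < ε/4 :=
            Metric.tendstoUniformly_iff.mp hconv (ε/4) (by linarith)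
          have t3 : ∀ᶠ i in atTop, dist (f (xi i)) (f x) < ε/4 := by
            have : Tendsto (fun i => f (xi i)) atTop (nhds (f x)) :=
              (hf.tendsto x).comp hxitend
            exact (tendsto_iff_dist_tendsto_zero.mp this).eventually
              (gt_mem_nhds (show (0:ℝ) < ε/4 by linarith))
          obtain ⟨i, h1, h2, h3⟩ := (t1.and (t2.and t3)).exists
          have hgeq : g i (yi i) = g i (xi i) := by
            have := connectedComponentIn_subset (g i ⁻¹' {g i (xi i)}) (xi i) (hyi i)
            simpa using this
          have e1 : dist (f (yi i)) (g i (yi i)) < ε/4 := h2 (yi i)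
          have e2 : dist (g i (xi i)) (f (xi i)) < ε/4 := by
            rw [dist_comm]; exact h2 (xi i)
          have T1 : dist (f (yi i)) (f (xi i)) ≤ dist (f (yi i)) (g i (yi i))
              + dist (g i (xi i)) (f (xi i)) := by
            rw [hgeq]
            exact dist_triangle _ _ _
          have T : dist (f y) (f x) ≤ dist (f y) (f (yi i)) + dist (f (yi i)) (f (xi i))
              + dist (f (xi i)) (f x) := dist_triangle4 _ _ _ _
          linarith
        have : dist (f y) (f x) ≤ 0 := by
          by_contra hcon
          push_neg at hcon
          have := hge (dist (f y) (f x) / 2) (by linarith)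
          linarith
        exact dist_le_zero.mp this
      have hsub : C ⊆ f ⁻¹' {f x} := fun y hy => by
        simp [hfconst y hy]
      exact hCconn.isPreconnected.subset_connectedComponentIn hxC hsub
    · -- not contained in thickening
      have hz : ∀ i, ∃ z ∈ Ci i, z ∉ Metric.thickening (1 / (m : ℝ)) (L i) := by
        intro i
        exact Set.not_subset.mp (hnocomp i (xi i) (hxi i))
      choose z hz1 hz2 using hz
      obtain ⟨zl, -, φ, hφ, hzconv⟩ :=
        isCompact_univ.tendsto_subseq (fun i => Set.mem_univ (z i))
      have hzlC : zl ∈ C := by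
        refine aux_mem_limit (fun i => Ci (φ i)) C (fun i => hCine (φ i))
          hCcomp.isClosed hCne ?_ (fun i => z (φ i)) (fun i => hz1 (φ i)) zl hzconv
        exact hCtend.comp hφ.tendsto_atTop
      have hinf : ∀ i, 1 / (m:ℝ) - hausdorffDist (L i) Llim ≤ infDist (z i) Llim := by
        intro i
        have h1 : 1 / (m:ℝ) ≤ infDist (z i) (L i) := by
          by_contra hcon
          push_neg at hcon
          exact hz2 i ((Metric.mem_thickening_iff_infDist_lt (hLne i)).mpr hcon)
        have h2 : infDist (z i) (L i) ≤ infDist (z i) Llim + hausdorffDist Llim (L i) :=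
          infDist_le_infDist_add_hausdorffDist (aux_edist_fin hLlimne (hLne i))
        rw [hausdorffDist_comm] at h2
        linarith
      have hlim1 : Tendsto (fun i => infDist (z (φ i)) Llim) atTop
          (nhds (infDist zl Llim)) :=
        ((Metric.continuous_infDist_pt Llim).tendsto zl).comp hzconv
      have hlim2 : Tendsto (fun i => 1 / (m:ℝ) - hausdorffDist (L (φ i)) Llim) atTop
          (nhds (1 / (m:ℝ))) := by
        have := (tendsto_const_nhds (x := 1 / (m:ℝ)) (f := atTop)).sub
          (hLconv.comp hφ.tendsto_atTop)
        simpa using this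
      have hfinal : 1 / (m:ℝ) ≤ infDist zl Llim :=
        le_of_tendsto_of_tendsto' hlim2 hlim1 (fun i => hinf (φ i))
      intro hsub
      have := (Metric.mem_thickening_iff_infDist_lt hLlimne).mp (hsub hzlC)
      linarith
end
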